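/- arXiv:1207.1838 — 8 statements merged into one kernel-verified Lean document; each statement's English description precedes it below -/
import Mathlib

section
/- For every two integers n and k with 2 ≤ k ≤ n, the generalized k-connectivity of the complete graph K_n equals n − ⌈k/2⌉. -/
open SimpleGraph
open scoped Classical

/-- An `S`-Steiner tree in `G`: a subgraph of `G` which is a tree and contains `S`. -/
def IsSteinerTree {V : Type*} (G : SimpleGraph V) (S : Set V) (T : G.Subgraph) : Prop :=
  S ⊆ T.verts ∧ T.coe.IsTree

/-- The generalized local connectivity `κ_G(S)`: the maximum number of pairwise
internally disjoint `S`-Steiner trees in `G`. -/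
noncomputable def steinerKappa {V : Type*} (G : SimpleGraph V) (S : Set V) : ℕ :=
  sSup {n | ∃ T : Fin n → G.Subgraph, (∀ i, IsSteinerTree G S (T i)) ∧
    ∀ i j, i ≠ j → (T i).edgeSet ∩ (T j).edgeSet = ∅ ∧ (T i).verts ∩ (T j).verts = S}

/-- The generalized local edge-connectivity `λ_G(S)`: the maximum number of pairwise
edge-disjoint `S`-Steiner trees in `G`. -/
noncomputable def steinerLambda {V : Type*} (G : SimpleGraph V) (S : Set V) : ℕ :=
  sSup {n | ∃ T : Fin n → G.Subgraph, (∀ i, IsSteinerTree G S (T i)) ∧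
    ∀ i j, i ≠ j → (T i).edgeSet ∩ (T j).edgeSet = ∅}

/-- The generalized `k`-connectivity `κ_k(G)` (with the convention that it is `0`
for a disconnected graph). -/
noncomputable def genKappa {V : Type*} [Fintype V] (G : SimpleGraph V) (k : ℕ) : ℕ :=
  if G.Connected then sInf {m | ∃ S : Finset V, S.card = k ∧ steinerKappa G ↑S = m} else 0

/-- The generalized `k`-edge-connectivity `λ_k(G)` (with the convention that it is `0`
for a disconnected graph). -/
noncomputable def genLambda {V : Type*} [Fintype V] (G : SimpleGraph V) (k : ℕ) : ℕ :=
  if G.Connected then sInf {m | ∃ S : Finset V, S.card = k ∧ steinerLambda G ↑S = m} else 0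

/-- The edge-connectivity `λ(G)`: the minimum number of edges whose removal disconnects `G`. -/
noncomputable def edgeConn {V : Type*} [Fintype V] (G : SimpleGraph V) : ℕ :=
  sInf {m | ∃ F : Set (Sym2 V), F ⊆ G.edgeSet ∧ F.ncard = m ∧ ¬ (G.deleteEdges F).Connected}

/-- The vertex connectivity `κ(G)`: the minimum size of a vertex set whose removal
disconnects `G` or leaves at most one vertex. -/
noncomputable def vertexConn {V : Type*} [Fintype V] (G : SimpleGraph V) : ℕ :=
  sInf {m | ∃ S : Finset V, S.card = m ∧
    (¬ (G.induce ((↑S : Set V)ᶜ)).Connected ∨ Fintype.card V ≤ m + 1)}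

/-! For `S` with `|S| = k ≥ 2`, a tree of a packing either has a vertex outside `S`, and these
vertices are distinct for distinct trees, or it spans exactly `S` and then uses `k - 1` of the
`k.choose 2` edges inside `S`. So there are at most `(n - k) + ⌊k / 2⌋ = n - ⌈k / 2⌉` trees.
In `K_n` this is attained by the `n - k` stars joining a vertex outside `S` to all of `S`,
together with `⌊k / 2⌋` edge-disjoint spanning double stars of `S`. -/

open Finset

namespace SimpleGraph

variable {V : Type*} {G : SimpleGraph V}

namespace Subgraph

lemma ncard_edgeSet_coe (H : G.Subgraph) : H.coe.edgeSet.ncard = H.edgeSet.ncard := by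
  rw [← image_coe_edgeSet_coe,
    Set.ncard_image_of_injective _ (Sym2.map.injective Subtype.val_injective)]

lemma coe_isTree_iff {H : G.Subgraph} [Finite H.verts] :
    H.coe.IsTree ↔ H.coe.Connected ∧ H.edgeSet.ncard + 1 = H.verts.ncard := by
  rw [isTree_iff_connected_and_card, Nat.card_coe_set_eq, Nat.card_coe_set_eq,
    ncard_edgeSet_coe]

lemma edgeSet_subset_image_offDiag {H : G.Subgraph} {S : Finset V} (hH : H.verts ⊆ S) :
    H.edgeSet ⊆ S.offDiag.image Sym2.mk.uncurry := by
  intro e he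
  induction e using Sym2.ind with
  | _ a b =>
    exact mem_image.2 ⟨(a, b), mem_offDiag.2 ⟨hH (H.edge_vert he), hH (H.edge_vert he.symm),
      he.ne⟩, rfl⟩

lemma edgeSet_inter_eq_empty {H H' : G.Subgraph} {S : Set V} (hS : H.verts ∩ H'.verts = S)
    (hH : ∀ e ∈ H.edgeSet, ∃ v ∈ e, v ∉ S) : H.edgeSet ∩ H'.edgeSet = ∅ := by
  refine Set.eq_empty_of_forall_notMem fun e ⟨he, he'⟩ => ?_
  obtain ⟨v, hve, hvS⟩ := hH e he
  exact hvS (hS ▸ ⟨H.mem_verts_of_mem_edge he hve, H'.mem_verts_of_mem_edge he' hve⟩)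

def ofParent (W : Set V) (r : V) (p : V → V) (hp : ∀ v ∈ W, v ≠ r → p v ∈ W ∧ G.Adj v (p v)) :
    G.Subgraph where
  verts := W
  Adj a b := (a ∈ W ∧ a ≠ r ∧ b = p a) ∨ (b ∈ W ∧ b ≠ r ∧ a = p b)
  adj_sub := by
    rintro a b (⟨ha, har, rfl⟩ | ⟨hb, hbr, rfl⟩)
    exacts [(hp a ha har).2, (hp b hb hbr).2.symm]
  edge_vert := by
    rintro a b (⟨ha, -, -⟩ | ⟨hb, hbr, rfl⟩)
    exacts [ha, (hp b hb hbr).1]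
  symm := ⟨fun _ _ => Or.symm⟩

variable {W : Set V} {r : V} {p : V → V} {hp : ∀ v ∈ W, v ≠ r → p v ∈ W ∧ G.Adj v (p v)}

lemma edgeSet_ofParent : (ofParent W r p hp).edgeSet = (fun v => s(v, p v)) '' (W \ {r}) := by
  ext e
  induction e using Sym2.ind with
  | _ a b =>
    simp only [ofParent, Set.mem_image, Set.mem_sdiff, Set.mem_singleton_iff, Sym2.eq_iff]
    aesop

/-- Every vertex reaches `r` by induction on the rank, and the `|W| - 1` edges `s(v, p v)` are
distinct: `s(v, p v) = s(w, p w)` with `v ≠ w` forces `w = p v`, `v = p w`, so `h v < h w < h v`. -/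
theorem isTree_ofParent (hW : W.Finite) (hr : r ∈ W) (h : V → ℕ)
    (hh : ∀ v ∈ W, v ≠ r → h (p v) < h v) : (ofParent W r p hp).coe.IsTree := by
  have : Finite (ofParent W r p hp).verts := hW.to_subtype
  have reach (v : V) (hv : v ∈ W) :
      (ofParent W r p hp).coe.Reachable ⟨v, hv⟩ ⟨r, hr⟩ := by
    induction v using (measure h).wf.induction with
    | _ v ih =>
      by_cases hvr : v = r
      · subst hvr; rfl
      have hpv := (hp v hv hvr).1
      have hadj : (ofParent W r p hp).coe.Adj ⟨v, hv⟩ ⟨p v, hpv⟩ := Or.inl ⟨hv, hvr, rfl⟩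
      exact hadj.reachable.trans (ih (p v) (hh v hv hvr) hpv)
  have hinj : Set.InjOn (fun v => s(v, p v)) (W \ {r}) := by
    rintro v ⟨hv, hvr⟩ w ⟨hw, hwr⟩ hvw
    rcases Sym2.eq_iff.1 hvw with ⟨hvw, -⟩ | ⟨hv', hw'⟩
    · exact hvw
    · have hwv : h w < h v := hw' ▸ hh v hv hvr
      have hvw : h v < h w := hv' ▸ hh w hw hwr
      omega
  have : Nonempty (ofParent W r p hp).verts := ⟨⟨r, hr⟩⟩
  refine coe_isTree_iff.2 ⟨⟨fun u v => (reach u u.2).trans (reach v v.2).symm⟩, ?_⟩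
  rw [edgeSet_ofParent, hinj.ncard_image]
  exact Set.ncard_sdiff_singleton_add_one hr hW

end Subgraph

def starSubgraph (S : Set V) (c : V) : (⊤ : SimpleGraph V).Subgraph :=
  Subgraph.ofParent (insert c S) c (fun _ => c) fun _ _ hv => ⟨Set.mem_insert c S, hv⟩

@[simp] lemma verts_starSubgraph (S : Set V) (c : V) : (starSubgraph S c).verts = insert c S :=
  rfl

lemma isTree_starSubgraph {S : Set V} (hS : S.Finite) (c : V) :
    (starSubgraph S c).coe.IsTree :=
  Subgraph.isTree_ofParent (hS.insert c) (Set.mem_insert c S) (fun v => if v = c then 0 else 1)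
    fun _ _ hv => by simp [hv]

lemma exists_mem_notMem_of_mem_edgeSet_starSubgraph {S : Set V} {c : V} (hc : c ∉ S)
    {e : Sym2 V} (he : e ∈ (starSubgraph S c).edgeSet) : ∃ v ∈ e, v ∉ S := by
  rw [starSubgraph, Subgraph.edgeSet_ofParent] at he
  obtain ⟨v, -, rfl⟩ := he
  exact ⟨c, Sym2.mem_mk_right v c, hc⟩

/-- The pairs `{2i, 2i+1}` of indices below `k` are the centres of the double stars: in the
`j`-th one, `2j+1` hangs off `2j`, an index of an earlier pair is attached to the centre of the
same parity and any later index to the one of opposite parity. Thus of the four edges between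
pairs `i < j`, the two parallel ones lie in tree `j` and the two crossing ones in tree `i`. -/
def doubleStarParent (j x : ℕ) : ℕ := if x / 2 < j then 2 * j + x % 2 else 2 * j + 1 - x % 2

def doubleStarRank (j x : ℕ) : ℕ := if x = 2 * j then 0 else if x = 2 * j + 1 then 1 else 2

lemma doubleStarParent_lt {j k : ℕ} (hj : j < k / 2) (x : ℕ) : doubleStarParent j x < k := by
  unfold doubleStarParent; split_ifs <;> omega

lemma doubleStarParent_ne (j x : ℕ) : doubleStarParent j x ≠ x := by
  unfold doubleStarParent; split_ifs <;> omega

lemma doubleStarRank_parent_lt {j x : ℕ} (hx : x ≠ 2 * j) :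
    doubleStarRank j (doubleStarParent j x) < doubleStarRank j x := by
  unfold doubleStarRank doubleStarParent; split_ifs <;> omega

lemma eq_of_doubleStarParent {j j' x y : ℕ}
    (h : x ≠ 2 * j ∧ y = doubleStarParent j x ∨ y ≠ 2 * j ∧ x = doubleStarParent j y)
    (h' : x ≠ 2 * j' ∧ y = doubleStarParent j' x ∨ y ≠ 2 * j' ∧ x = doubleStarParent j' y) :
    j = j' := by
  unfold doubleStarParent at h h'; split_ifs at h h' <;> omega

section DoubleStar

variable {k : ℕ} (e : Fin k ↪ V)

def doubleStarParentFin (j : Fin (k / 2)) (x : Fin k) : Fin k :=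
  ⟨doubleStarParent j x, doubleStarParent_lt j.2 x⟩

def doubleStarRoot (j : Fin (k / 2)) : Fin k := ⟨2 * j, by omega⟩

noncomputable def doubleStar (j : Fin (k / 2)) : (⊤ : SimpleGraph V).Subgraph :=
  Subgraph.ofParent (Set.range e) (e (doubleStarRoot j))
    (Function.extend e (e ∘ doubleStarParentFin j) id) <| by
    rintro _ ⟨x, rfl⟩ -
    rw [e.injective.extend_apply]
    exact ⟨Set.mem_range_self _,
      e.injective.ne fun h => doubleStarParent_ne j x (congrArg Fin.val h).symm⟩

variable {e}

@[simp] lemma verts_doubleStar (j : Fin (k / 2)) : (doubleStar e j).verts = Set.range e :=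
  rfl

lemma doubleStar_adj_iff {j : Fin (k / 2)} {x y : Fin k} :
    (doubleStar e j).Adj (e x) (e y) ↔ (x : ℕ) ≠ 2 * j ∧ (y : ℕ) = doubleStarParent j x ∨
      (y : ℕ) ≠ 2 * j ∧ (x : ℕ) = doubleStarParent j y := by
  simp [doubleStar, Subgraph.ofParent, e.injective.extend_apply, e.injective.eq_iff, Fin.ext_iff,
    doubleStarRoot, doubleStarParentFin]

lemma isTree_doubleStar (j : Fin (k / 2)) : (doubleStar e j).coe.IsTree := by
  refine Subgraph.isTree_ofParent (Set.finite_range e) (Set.mem_range_self _)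
    (Function.extend e (fun x => doubleStarRank j x) 0) ?_
  rintro _ ⟨x, rfl⟩ hx
  simp only [Function.comp_apply, e.injective.extend_apply]
  exact doubleStarRank_parent_lt fun h => hx (congrArg e (Fin.ext h))

lemma edgeSet_doubleStar_inter {j j' : Fin (k / 2)} (hj : j ≠ j') :
    (doubleStar e j).edgeSet ∩ (doubleStar e j').edgeSet = ∅ := by
  refine Set.eq_empty_of_forall_notMem fun s ⟨hs, hs'⟩ => hj ?_
  induction s using Sym2.ind with
  | _ a b =>
    obtain ⟨x, rfl⟩ := (doubleStar e j).edge_vert hs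
    obtain ⟨y, rfl⟩ := (doubleStar e j).edge_vert hs.symm
    exact Fin.ext (eq_of_doubleStarParent (doubleStar_adj_iff.1 hs) (doubleStar_adj_iff.1 hs'))

end DoubleStar

section Packing

variable {ι κ : Type*}

def IsSteinerPacking (G : SimpleGraph V) (S : Set V) (T : ι → G.Subgraph) : Prop :=
  (∀ i, IsSteinerTree G S (T i)) ∧
    Pairwise fun i j => (T i).edgeSet ∩ (T j).edgeSet = ∅ ∧ (T i).verts ∩ (T j).verts = S

lemma steinerKappa_eq_sSup (G : SimpleGraph V) (S : Set V) :
    steinerKappa G S = sSup {m | ∃ T : Fin m → G.Subgraph, IsSteinerPacking G S T} :=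
  rfl

lemma IsSteinerPacking.comp {S : Set V} {T : ι → G.Subgraph} (hT : IsSteinerPacking G S T)
    {f : κ → ι} (hf : f.Injective) : IsSteinerPacking G S (T ∘ f) :=
  ⟨fun i => hT.1 (f i), hT.2.comp_of_injective hf⟩

variable [Fintype V] [Fintype ι] {S : Finset V} {T : ι → G.Subgraph}

lemma IsSteinerPacking.card_verts_ne_le (hT : IsSteinerPacking G S T) :
    #{i | (T i).verts ≠ S} ≤ Fintype.card V - #S := by
  rw [← card_compl]
  refine (card_le_card_biUnion (f := fun i => (T i).verts.toFinset \ S) ?_ ?_).trans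
    (card_le_card (biUnion_subset.2 fun i _ v hv => mem_compl.2 (mem_sdiff.1 hv).2))
  · intro i _ j _ hij
    refine Finset.disjoint_left.2 fun v hvi hvj => (mem_sdiff.1 hvi).2 ?_
    have hv : v ∈ (T i).verts ∩ (T j).verts :=
      ⟨Set.mem_toFinset.1 (mem_sdiff.1 hvi).1, Set.mem_toFinset.1 (mem_sdiff.1 hvj).1⟩
    rwa [(hT.2 hij).2] at hv
  · intro i hi
    obtain ⟨v, hv, hvS⟩ :=
      Set.exists_of_ssubset ((hT.1 i).1.ssubset_of_ne (Ne.symm (mem_filter.1 hi).2))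
    exact ⟨v, mem_sdiff.2 ⟨Set.mem_toFinset.2 hv, hvS⟩⟩

lemma IsSteinerPacking.card_verts_eq_le (hS : 2 ≤ #S) (hT : IsSteinerPacking G S T) :
    #{i | (T i).verts = S} ≤ #S / 2 := by
  set A : Finset ι := {i | (T i).verts = S}
  have hverts {i : ι} (hi : i ∈ A) : (T i).verts = S := (mem_filter.1 hi).2
  have hedges (i : ι) (hi : i ∈ A) : #(T i).edgeSet.toFinset = #S - 1 := by
    have := (Subgraph.coe_isTree_iff.1 (hT.1 i).2).2
    rw [hverts hi, Set.ncard_coe_finset, Set.ncard_eq_toFinset_card'] at this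
    omega
  have hdisj : (A : Set ι).PairwiseDisjoint fun i => (T i).edgeSet.toFinset :=
    fun i _ j _ hij => Set.disjoint_toFinset.2 (Set.disjoint_iff_inter_eq_empty.2 (hT.2 hij).1)
  have hsub (i : ι) (hi : i ∈ A) : (T i).edgeSet.toFinset ⊆ S.offDiag.image Sym2.mk.uncurry :=
    fun _ he => Finset.mem_coe.1 <| Subgraph.edgeSet_subset_image_offDiag (hverts hi).le <|
      Set.mem_toFinset.1 he
  have hcount : #A * (#S - 1) ≤ #S * (#S - 1) / 2 :=
    calc #A * (#S - 1) = ∑ i ∈ A, #(T i).edgeSet.toFinset := by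
          rw [sum_congr rfl hedges, sum_const, smul_eq_mul]
      _ = #(A.biUnion fun i => (T i).edgeSet.toFinset) := (card_biUnion hdisj).symm
      _ ≤ #(S.offDiag.image Sym2.mk.uncurry) := card_le_card (biUnion_subset.2 hsub)
      _ = #S * (#S - 1) / 2 := by rw [Sym2.card_image_offDiag, Nat.choose_two_right]
  have h2A : 2 * #A * (#S - 1) ≤ #S * (#S - 1) := by
    rw [mul_assoc, mul_comm]; exact (Nat.le_div_iff_mul_le two_pos).1 hcount
  have := Nat.le_of_mul_le_mul_right h2A (by omega)
  omega

theorem IsSteinerPacking.card_le (hS : 2 ≤ #S) (hT : IsSteinerPacking G S T) :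
    Fintype.card ι ≤ Fintype.card V - (#S + 1) / 2 := by
  have hsplit : #{i | (T i).verts = S} + #{i | (T i).verts ≠ S} = Fintype.card ι :=
    card_filter_add_card_filter_not _
  have := hT.card_verts_ne_le
  have := hT.card_verts_eq_le hS
  have := card_le_univ S
  omega

end Packing

theorem isSteinerPacking_top {k : ℕ} {S : Set V} (e : Fin k ↪ V) (he : Set.range e = S) :
    IsSteinerPacking ⊤ S (Sum.elim (fun c : {c // c ∉ S} => starSubgraph S c) (doubleStar e)) := by
  subst he
  have hstar (c : {c // c ∉ Set.range e}) {H : (⊤ : SimpleGraph V).Subgraph}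
      (hH : (starSubgraph (Set.range e) c).verts ∩ H.verts = Set.range e) :
      (starSubgraph (Set.range e) c).edgeSet ∩ H.edgeSet = ∅ :=
    Subgraph.edgeSet_inter_eq_empty hH fun _ => exists_mem_notMem_of_mem_edgeSet_starSubgraph c.2
  have hsd (c : {c // c ∉ Set.range e}) (j : Fin (k / 2)) :
      (starSubgraph (Set.range e) c).verts ∩ (doubleStar e j).verts = Set.range e := by
    simp
  refine ⟨Sum.rec (fun c => ⟨Set.subset_insert _ _, isTree_starSubgraph (Set.finite_range e) c⟩)
    fun j => ⟨subset_rfl, isTree_doubleStar j⟩, ?_⟩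
  rintro (c | j) (c' | j') hne <;> dsimp only [Sum.elim_inl, Sum.elim_inr]
  · have hcc' : (c : V) ∉ insert (c' : V) (Set.range e) :=
      Set.mem_insert_iff.not.2 (not_or.2 ⟨fun h => hne (congrArg Sum.inl (Subtype.ext h)), c.2⟩)
    have hv : (starSubgraph (Set.range e) c).verts ∩ (starSubgraph (Set.range e) c').verts =
        Set.range e := by
      rw [verts_starSubgraph, verts_starSubgraph, Set.insert_inter_of_notMem hcc',
        Set.inter_eq_left.2 (Set.subset_insert _ _)]
    exact ⟨hstar c hv, hv⟩
  · exact ⟨hstar c (hsd c j'), hsd c j'⟩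
  · rw [Set.inter_comm, Set.inter_comm (doubleStar e j).verts]
    exact ⟨hstar c' (hsd c' j), hsd c' j⟩
  · exact ⟨edgeSet_doubleStar_inter fun h => hne (congrArg Sum.inr h), Set.inter_self _⟩

theorem steinerKappa_top [Fintype V] (S : Finset V) (hS : 2 ≤ #S) :
    steinerKappa (⊤ : SimpleGraph V) S = Fintype.card V - (#S + 1) / 2 := by
  let e : Fin #S ↪ V := S.equivFin.symm.toEmbedding.trans (Function.Embedding.subtype _)
  have he : Set.range e = S := Set.ext fun v =>
    ⟨fun ⟨y, hy⟩ => hy ▸ (S.equivFin.symm y).2, fun hv => ⟨S.equivFin ⟨v, hv⟩, by simp [e]⟩⟩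
  have hcard : Fintype.card ({c // c ∉ (S : Set V)} ⊕ Fin (#S / 2)) =
      Fintype.card V - (#S + 1) / 2 := by
    have := card_le_univ S
    simp only [SetLike.mem_coe, Fintype.card_sum, Fintype.card_subtype_compl, Fintype.card_coe,
      Fintype.card_fin]
    omega
  rw [steinerKappa_eq_sSup]
  refine IsGreatest.csSup_eq ⟨?_, fun m ⟨T, hT⟩ => by simpa using hT.card_le hS⟩
  rw [← hcard]
  exact ⟨_, (isSteinerPacking_top e he).comp (Fintype.equivFin _).symm.injective⟩

end SimpleGraph

theorem stmt0 (n k : ℕ) (hk : 2 ≤ k) (hkn : k ≤ n) :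
    genKappa (⊤ : SimpleGraph (Fin n)) k = n - (k + 1) / 2 := by
  obtain ⟨S, -, hS⟩ := exists_subset_card_eq (s := (univ : Finset (Fin n))) (by simpa using hkn)
  have hvalues : {m | ∃ S : Finset (Fin n), #S = k ∧
      steinerKappa (⊤ : SimpleGraph (Fin n)) (S : Set (Fin n)) = m} =
      {n - (k + 1) / 2} := by
    ext m
    constructor
    · rintro ⟨S, rfl, rfl⟩
      simpa using steinerKappa_top S hk
    · rintro rfl
      exact ⟨S, hS, by simpa [hS] using steinerKappa_top S (hS ▸ hk)⟩
  have : Nonempty (Fin n) := ⟨⟨0, by omega⟩⟩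
  rw [genKappa, if_pos connected_top, hvalues, csInf_singleton]
end

section
/- If G is a connected graph of order n and 2 ≤ k ≤ n, then κ_k(G) ≤ λ_k(G) ≤ δ(G), where δ(G) is the minimum degree of G. -/
open SimpleGraph
open scoped Classical

/-!
In a family of edge-disjoint `S`-Steiner trees with `|S| ≥ 2`, every tree contains an edge at
each `v ∈ S`, and these edges are distinct; hence `λ(S) ≤ deg v`. Choosing `S` to contain a
vertex of minimum degree gives `λ_k ≤ δ`. Internally disjoint trees are edge-disjoint, so
`κ(S) ≤ λ(S)` for every `S`, and `κ_k ≤ λ_k` follows by comparing at a minimiser of `λ(S)`.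
-/

namespace SimpleGraph

variable {V : Type*} {G : SimpleGraph V} {S : Set V}

lemma IsSteinerTree.exists_adj {T : G.Subgraph} (hT : IsSteinerTree G S T) {v : V} (hv : v ∈ S)
    (hS : S.Nontrivial) : ∃ w, T.Adj v w := by
  obtain ⟨u, hu, huv⟩ := hS.exists_ne v
  obtain ⟨p⟩ := hT.2.connected.preconnected ⟨v, hT.1 hv⟩ ⟨u, hT.1 hu⟩
  have hp : ¬ p.Nil := Walk.not_nil_of_ne (by simpa [Subtype.ext_iff] using huv.symm)
  exact ⟨p.getVert 1, p.adj_snd hp⟩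

lemma card_le_degree_of_steinerTrees {v : V} [Fintype (G.neighborSet v)] (hv : v ∈ S)
    (hS : S.Nontrivial) {n : ℕ} (T : Fin n → G.Subgraph) (hT : ∀ i, IsSteinerTree G S (T i))
    (hdisj : ∀ i j, i ≠ j → (T i).edgeSet ∩ (T j).edgeSet = ∅) :
    n ≤ G.degree v := by
  choose w hw using fun i => (hT i).exists_adj hv hS
  have hw_inj : Function.Injective w := by
    intro i j hij
    by_contra hne
    have hi : s(v, w i) ∈ (T i).edgeSet := hw i
    have hj : s(v, w i) ∈ (T j).edgeSet := by rw [Subgraph.mem_edgeSet, hij]; exact hw j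
    simpa [hdisj i j hne] using Set.mem_inter hi hj
  simpa using Finset.card_le_card_of_injOn (s := Finset.univ) w
    (fun i _ => (G.mem_neighborFinset v _).2 ((T i).adj_sub (hw i))) hw_inj.injOn

lemma bddAbove_steinerLambda {v : V} [Fintype (G.neighborSet v)] (hv : v ∈ S)
    (hS : S.Nontrivial) :
    BddAbove {n | ∃ T : Fin n → G.Subgraph, (∀ i, IsSteinerTree G S (T i)) ∧
      ∀ i j, i ≠ j → (T i).edgeSet ∩ (T j).edgeSet = ∅} :=
  ⟨G.degree v, fun _ ⟨T, hT, hdisj⟩ => card_le_degree_of_steinerTrees hv hS T hT hdisj⟩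

lemma steinerLambda_le_degree {v : V} [Fintype (G.neighborSet v)] (hv : v ∈ S)
    (hS : S.Nontrivial) : steinerLambda G S ≤ G.degree v :=
  csSup_le ⟨0, Fin.elim0, fun i => i.elim0, fun i => i.elim0⟩
    fun _ ⟨T, hT, hdisj⟩ => card_le_degree_of_steinerTrees hv hS T hT hdisj

lemma steinerKappa_le_steinerLambda [G.LocallyFinite] (hS : S.Nontrivial) :
    steinerKappa G S ≤ steinerLambda G S := by
  obtain ⟨v, hv⟩ := hS.nonempty
  exact csSup_le_csSup (bddAbove_steinerLambda hv hS)
    ⟨0, Fin.elim0, fun i => i.elim0, fun i => i.elim0⟩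
    fun _ ⟨T, hT, hdisj⟩ => ⟨T, hT, fun i j hij => (hdisj i j hij).1⟩

variable [Fintype V]

lemma genKappa_le_genLambda (G : SimpleGraph V) {k : ℕ} (hk : 2 ≤ k)
    (hkn : k ≤ Fintype.card V) : genKappa G k ≤ genLambda G k := by
  unfold genKappa genLambda
  split_ifs
  · obtain ⟨S₀, -, hS₀⟩ :=
      Finset.exists_subset_card_eq (s := Finset.univ) (by simpa using hkn)
    obtain ⟨S, hSk, hmin⟩ :=
      Nat.sInf_mem (s := {m | ∃ S : Finset V, S.card = k ∧ steinerLambda G ↑S = m})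
        ⟨_, S₀, hS₀, rfl⟩
    refine le_trans (Nat.sInf_le ⟨S, hSk, rfl⟩) ?_
    rw [← hmin]
    exact steinerKappa_le_steinerLambda (Finset.one_lt_card_iff_nontrivial.1 (by omega))
  · rfl

lemma genLambda_le_minDegree (G : SimpleGraph V) [DecidableRel G.Adj] {k : ℕ} (hk : 2 ≤ k)
    (hkn : k ≤ Fintype.card V) : genLambda G k ≤ G.minDegree := by
  unfold genLambda
  split_ifs
  · have : Nonempty V := Fintype.card_pos_iff.1 (by omega)
    obtain ⟨v, hv⟩ := G.exists_minimal_degree_vertex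
    obtain ⟨S, hvS, hSk⟩ :=
      Finset.exists_superset_card_eq (s := {v}) (by rw [Finset.card_singleton]; omega) hkn
    refine le_trans (Nat.sInf_le ⟨S, hSk, rfl⟩) ?_
    rw [hv]
    exact steinerLambda_le_degree (by simpa using hvS)
      (Finset.one_lt_card_iff_nontrivial.1 (by omega))
  · exact Nat.zero_le _

end SimpleGraph

theorem stmt2_general {V : Type*} [Fintype V] (G : SimpleGraph V) [DecidableRel G.Adj]
    (k : ℕ) (hk : 2 ≤ k) (hkn : k ≤ Fintype.card V) :
    genKappa G k ≤ genLambda G k ∧ genLambda G k ≤ G.minDegree :=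
  ⟨genKappa_le_genLambda G hk hkn, genLambda_le_minDegree G hk hkn⟩

theorem stmt2 {V : Type*} [Fintype V] (G : SimpleGraph V) [DecidableRel G.Adj]
    (hG : G.Connected) (k : ℕ) (hk : 2 ≤ k) (hkn : k ≤ Fintype.card V) :
    genKappa G k ≤ genLambda G k ∧ genLambda G k ≤ G.minDegree :=
  stmt2_general G k hk hkn
end

section
/- For a connected graph G of order n and an integer k with 3 ≤ k ≤ n, λ_k(G) ≥ ⌊λ(G)/2⌋, where λ(G) is the edge-connectivity of G. -/
open SimpleGraph
open scoped Classical

/-!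
Nash-Williams–Tutte in the weak form "`2ℓ`-edge-connected ⇒ `ℓ` edge-disjoint spanning trees",
by an exchange argument. Take `ℓ` edge-disjoint forests of `G` with the largest total number of
edges. An exchange puts an unused edge `xy` of `G` into forest `i` and removes an edge of the
`x`–`y` path of that forest; let `K` be the graph of those edges of `G` that are unused in some
packing reachable by exchanges. By maximality the ends of an unused edge are joined in every
forest, and by exchanging the path edges one sees that they are joined along edges of `K`; so
every forest, restricted to `K`, spans each component of `K`. If `K` had `p ≥ 2` components,
every forest would have at most `p - 1` edges between components, whereas `2ℓ`-edge-connectivity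
gives at least `ℓ p` such edges of `G`, all of them used by the forests. Hence `K` is connected
and the forests are spanning trees. Spanning trees are `S`-Steiner trees for every `S`, and
`λ(G) ≥ 2 ⌊λ(G) / 2⌋`.
-/

namespace SimpleGraph

variable {V ι : Type*} {G H K : SimpleGraph V}

lemma Reachable.of_forall_adj (h : ∀ a b, G.Adj a b → H.Reachable a b) {u v : V}
    (huv : G.Reachable u v) : H.Reachable u v := by
  obtain ⟨p⟩ := huv
  induction p with
  | nil => rfl
  | cons hadj _ ih => exact (h _ _ hadj).trans ih

lemma Reachable.eq_of_forall_adj {π : V → ι} (h : ∀ a b, G.Adj a b → π a = π b) {u v : V}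
    (huv : G.Reachable u v) : π u = π v := by
  obtain ⟨p⟩ := huv
  induction p with
  | nil => rfl
  | cons hadj _ ih => exact (h _ _ hadj).trans ih

lemma IsAcyclic.not_reachable_deleteEdges_of_mem_edges (hH : H.IsAcyclic) {x y : V}
    {p : H.Walk x y} (hp : p.IsPath) {f : Sym2 V} (hf : f ∈ p.edges) :
    ¬ (H.deleteEdges {f}).Reachable x y := by
  rintro ⟨q⟩
  have hq := q.bypass_isPath.mapLe (deleteEdges_le {f})
  have hpq : p = q.bypass.mapLe (deleteEdges_le {f}) :=
    congrArg Subtype.val ((hH.subsingleton_path x y).elim ⟨p, hp⟩ ⟨_, hq⟩)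
  rw [hpq, Walk.edges_mapLe_eq_edges] at hf
  simpa using q.bypass.edges_subset_edgeSet hf

lemma card_le_card_edgeSet_add_card_connectedComponent [Finite V] (H : SimpleGraph V) :
    Nat.card V ≤ Nat.card H.edgeSet + Nat.card H.ConnectedComponent := by
  have := Fintype.ofFinite H.ConnectedComponent
  let f : (Σ C : H.ConnectedComponent, C.toSimpleGraph.edgeSet) → H.edgeSet :=
    fun e => e.1.toSimpleGraph_hom.mapEdgeSet e.2
  have hf : f.Injective := by
    rintro ⟨C, ⟨e, he⟩⟩ ⟨D, ⟨e', he'⟩⟩ hee'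
    simp only [f, Hom.mapEdgeSet, Subtype.mk.injEq] at hee'
    induction e using Sym2.ind with | _ u w => ?_
    obtain rfl : C = D := by
      have : (u : V) ∈ Sym2.map D.toSimpleGraph_hom e' := hee' ▸ Sym2.mem_map.2 ⟨u, by simp, rfl⟩
      obtain ⟨u', -, hu'⟩ := Sym2.mem_map.1 this
      exact ConnectedComponent.eq_of_common_vertex u.2 (hu' ▸ u'.2)
    obtain rfl := Sym2.map.injective Subtype.val_injective hee'
    rfl
  calc Nat.card V = Nat.card (Σ C : H.ConnectedComponent, C) :=
        Nat.card_congr (Equiv.sigmaFiberEquiv H.connectedComponentMk).symm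
    _ = ∑ C : H.ConnectedComponent, Nat.card C := Nat.card_sigma
    _ ≤ ∑ C : H.ConnectedComponent, (Nat.card C.toSimpleGraph.edgeSet + 1) :=
        Finset.sum_le_sum fun C _ => C.connected_toSimpleGraph.card_vert_le_card_edgeSet_add_one
    _ = Nat.card (Σ C : H.ConnectedComponent, C.toSimpleGraph.edgeSet) +
          Nat.card H.ConnectedComponent := by
        rw [Finset.sum_add_distrib, Nat.card_sigma, Nat.card_eq_fintype_card]; simp
    _ ≤ Nat.card H.edgeSet + Nat.card H.ConnectedComponent := by
        gcongr; exact Nat.card_le_card_of_injective f hf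

lemma IsAcyclic.ncard_edgeSet_add_one_le [Finite V] [Nonempty V] (hH : H.IsAcyclic) :
    H.edgeSet.ncard + 1 ≤ Nat.card V := by
  have := Fintype.ofFinite V
  obtain ⟨T, hHT, -, hT⟩ := connected_top.exists_isTree_le_of_le_of_isAcyclic le_top hH
  rw [Nat.card_eq_fintype_card, ← hT.card_edgeFinset, ← Set.ncard_coe_finset, coe_edgeFinset]
  exact Nat.add_le_add_right (Set.ncard_le_ncard (edgeSet_mono hHT)) 1

lemma ncard_edgeSet_sup_edge [Finite V] {x y : V} (hxy : x ≠ y) (h : s(x, y) ∉ H.edgeSet) :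
    (H ⊔ edge x y).edgeSet.ncard = H.edgeSet.ncard + 1 := by
  have hdiag : {s(x, y)} \ Sym2.diagSet = {s(x, y)} := by simpa using hxy
  rw [edgeSet_sup, edgeSet_edge, hdiag, Set.union_singleton, Set.ncard_insert_of_notMem h]

lemma edgeSet_sup_edge_subset (x y : V) : (H ⊔ edge x y).edgeSet ⊆ insert s(x, y) H.edgeSet := by
  rw [edgeSet_sup, edgeSet_edge]
  exact Set.union_subset (Set.subset_insert _ _)
    (Set.sdiff_subset.trans (Set.singleton_subset_iff.2 (Set.mem_insert _ _)))

def crossingEdges (G : SimpleGraph V) (π : V → ι) : Set (Sym2 V) :=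
  {e ∈ G.edgeSet | ¬ (e.map π).IsDiag}

lemma crossingEdges_comp_subset {κ : Type*} (π : V → ι) (g : ι → κ) :
    G.crossingEdges (g ∘ π) ⊆ G.crossingEdges π := by
  rintro e ⟨he, hdiag⟩
  refine ⟨he, fun h => hdiag ?_⟩
  rw [← Sym2.map_map]
  exact Sym2.IsDiag.map h

lemma IsEdgeConnected.le_encard_crossingEdges {k : ℕ} (h : G.IsEdgeConnected k) {π : V → ι}
    {u v : V} (huv : π u ≠ π v) : k ≤ (G.crossingEdges π).encard := by
  by_contra! hlt
  refine huv ((h u v hlt).eq_of_forall_adj fun a b hab => ?_)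
  rw [deleteEdges_adj] at hab
  by_contra hne
  exact hab.2 ⟨hab.1, by simpa using hne⟩

lemma notMem_crossingEdges_of_mem_edgeSet {e : Sym2 V} (he : e ∈ K.edgeSet) :
    e ∉ G.crossingEdges K.connectedComponentMk := by
  induction e using Sym2.ind with | _ a b => ?_
  exact fun hcross => hcross.2 (by simpa using ConnectedComponent.sound (Adj.reachable he))

lemma IsEdgeConnected.mul_card_le_ncard_crossingEdges [Finite V] [Fintype ι] [Nontrivial ι]
    {ℓ : ℕ} (h : G.IsEdgeConnected (2 * ℓ)) {π : V → ι} (hπ : π.Surjective) :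
    ℓ * Fintype.card ι ≤ (G.crossingEdges π).ncard := by
  set t := (Set.toFinite (G.crossingEdges π)).toFinset
  let r : ι → Sym2 V → Prop := fun c e => e ∈ G.crossingEdges (fun v => π v = c)
  have hcut : ∀ c, 2 * ℓ ≤ (t.bipartiteAbove r c).card := by
    intro c
    obtain ⟨c', hc'⟩ := exists_ne c
    obtain ⟨u, rfl⟩ := hπ c
    obtain ⟨v, rfl⟩ := hπ c'
    have := h.le_encard_crossingEdges (π := fun w => π w = π u) (u := u) (v := v)
      (by simpa using hc')
    have hsub := crossingEdges_comp_subset (G := G) π (· = π u)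
    have heq : t.bipartiteAbove r (π u) =
        (Set.toFinite (G.crossingEdges fun v => π v = π u)).toFinset := by
      ext e
      simp only [Finset.mem_bipartiteAbove, Set.Finite.mem_toFinset, t, r]
      exact ⟨And.right, fun he => ⟨hsub he, he⟩⟩
    rw [heq, ← Set.ncard_eq_toFinset_card]
    rw [← (Set.toFinite _).cast_ncard_eq] at this
    exact_mod_cast this
  -- a crossing edge lies only in the cuts of the classes of its two ends
  have hends : ∀ e ∈ t, (Finset.univ.bipartiteBelow r e).card ≤ 2 := by
    intro e _
    induction e using Sym2.ind with | _ a b => ?_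
    refine (Finset.card_le_card (t := {π a, π b}) fun c hc => ?_).trans Finset.card_le_two
    rw [Finset.mem_bipartiteBelow] at hc
    have hdiag := hc.2.2
    rw [Sym2.map_mk, Sym2.mk_isDiag_iff] at hdiag
    rw [Finset.mem_insert, Finset.mem_singleton]
    by_contra! hne
    exact hdiag (by simp [hne.1.symm, hne.2.symm])
  have hdouble :=
    Finset.sum_card_bipartiteAbove_eq_sum_card_bipartiteBelow (s := Finset.univ) (t := t) r
  have h1 := Finset.sum_le_sum fun c (_ : c ∈ Finset.univ) => hcut c
  have h2 := Finset.sum_le_sum hends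
  simp only [Finset.sum_const, Finset.card_univ, smul_eq_mul] at h1 h2
  rw [Set.ncard_eq_toFinset_card _ (Set.toFinite _)]
  nlinarith

lemma IsAcyclic.ncard_crossingEdges_add_one_le [Finite V] [Nonempty V] (hH : H.IsAcyclic)
    (hK : ∀ u v, K.Reachable u v → (H ⊓ K).Reachable u v) :
    (H.crossingEdges K.connectedComponentMk).ncard + 1 ≤ Nat.card K.ConnectedComponent := by
  have hcomp : Nat.card (H ⊓ K).ConnectedComponent ≤ Nat.card K.ConnectedComponent := by
    refine Nat.card_le_card_of_injective (ConnectedComponent.map (Hom.ofLE inf_le_right)) ?_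
    intro C D hCD
    induction C using ConnectedComponent.ind with | _ u => ?_
    induction D using ConnectedComponent.ind with | _ v => ?_
    simp only [ConnectedComponent.map_mk, Hom.coe_ofLE, id, ConnectedComponent.eq] at hCD ⊢
    exact hK u v hCD
  have hsplit : (H ⊓ K).edgeSet.ncard + (H.crossingEdges K.connectedComponentMk).ncard ≤
      H.edgeSet.ncard := by
    rw [← Set.ncard_union_eq]
    · exact Set.ncard_le_ncard (Set.union_subset (edgeSet_mono inf_le_left) fun e he => he.1)
    · rw [Set.disjoint_left]
      exact fun e hHK => notMem_crossingEdges_of_mem_edgeSet (edgeSet_mono inf_le_right hHK)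
  have := (H ⊓ K).card_le_card_edgeSet_add_card_connectedComponent
  have := hH.ncard_edgeSet_add_one_le
  simp only [Nat.card_coe_set_eq] at *
  omega

structure IsForestPacking (G : SimpleGraph V) (F : ι → SimpleGraph V) : Prop where
  le : ∀ i, F i ≤ G
  isAcyclic : ∀ i, (F i).IsAcyclic
  pairwise_disjoint : Pairwise fun i j => Disjoint (F i).edgeSet (F j).edgeSet

noncomputable def totalEdges [Fintype ι] (F : ι → SimpleGraph V) : ℕ :=
  ∑ i, (F i).edgeSet.ncard

lemma IsForestPacking.update [DecidableEq ι] {F : ι → SimpleGraph V} (hF : IsForestPacking G F)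
    {i : ι} (hle : H ≤ G) (hH : H.IsAcyclic)
    (hdisj : ∀ j, j ≠ i → Disjoint H.edgeSet (F j).edgeSet) :
    IsForestPacking G (Function.update F i H) where
  le j := by
    rcases eq_or_ne j i with rfl | hj
    · simpa using hle
    · simpa [hj] using hF.le j
  isAcyclic j := by
    rcases eq_or_ne j i with rfl | hj
    · simpa using hH
    · simpa [hj] using hF.isAcyclic j
  pairwise_disjoint j j' hjj' := by
    rcases eq_or_ne j i with rfl | hj <;> rcases eq_or_ne j' j with rfl | hj'
    · exact absurd rfl hjj'
    · simpa [hj'] using hdisj j' hj'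
    · exact absurd rfl hjj'
    · rcases eq_or_ne j' i with rfl | hj''
      · simpa [hj] using (hdisj j hj).symm
      · simpa [hj, hj''] using hF.pairwise_disjoint hjj'

lemma totalEdges_update [Fintype ι] [DecidableEq ι] (F : ι → SimpleGraph V) (i : ι)
    (H : SimpleGraph V) :
    totalEdges (Function.update F i H) + (F i).edgeSet.ncard = totalEdges F + H.edgeSet.ncard := by
  unfold totalEdges
  rw [← Finset.add_sum_erase _ _ (Finset.mem_univ i),
    ← Finset.add_sum_erase _ _ (Finset.mem_univ i),
    Function.update_self, Finset.sum_congr rfl fun j hj => by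
      rw [Function.update_of_ne (Finset.ne_of_mem_erase hj)]]
  ring

lemma IsForestPacking.disjoint_sup_edge {F : ι → SimpleGraph V} (hF : IsForestPacking G F)
    {i j : ι} (hji : j ≠ i) {x y : V} (hxy : ∀ j, s(x, y) ∉ (F j).edgeSet) (hH : H ≤ F i) :
    Disjoint (H ⊔ edge x y).edgeSet (F j).edgeSet :=
  (Set.disjoint_insert_left.2 ⟨hxy j, (hF.pairwise_disjoint hji.symm).mono_left
    (edgeSet_mono hH)⟩).mono_left (edgeSet_sup_edge_subset x y)

lemma IsEdgeConnected.preconnected_of_forall_isAcyclic [Finite V] [Nonempty V] [Fintype ι]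
    [Nonempty ι] (h : G.IsEdgeConnected (2 * Fintype.card ι)) {F : ι → SimpleGraph V}
    (hF : ∀ i, (F i).IsAcyclic) (hK : ∀ i u v, K.Reachable u v → (F i ⊓ K).Reachable u v)
    (hcover : ∀ e ∈ G.edgeSet, e ∉ K.edgeSet → ∃ i, e ∈ (F i).edgeSet) : K.Preconnected := by
  by_contra hK'
  obtain ⟨u, v, huv⟩ : ∃ u v, ¬ K.Reachable u v := by simpa [Preconnected] using hK'
  have := Fintype.ofFinite K.ConnectedComponent
  have : Nontrivial K.ConnectedComponent :=
    ⟨⟨_, _, fun h => huv (ConnectedComponent.exact h)⟩⟩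
  have hcross : G.crossingEdges K.connectedComponentMk ⊆
      ⋃ i, (F i).crossingEdges K.connectedComponentMk := by
    intro e he
    obtain ⟨i, hi⟩ := hcover e he.1 fun heK => notMem_crossingEdges_of_mem_edgeSet heK he
    exact Set.mem_iUnion.2 ⟨i, hi, he.2⟩
  have hlower := h.mul_card_le_ncard_crossingEdges (π := K.connectedComponentMk)
    fun C : K.ConnectedComponent => C.exists_rep
  have hupper := (Set.ncard_le_ncard hcross).trans (Set.ncard_iUnion_le_of_fintype _)
  have hforest := Finset.sum_le_sum fun i (_ : i ∈ Finset.univ) =>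
    (hF i).ncard_crossingEdges_add_one_le (hK i)
  rw [Finset.sum_add_distrib, Nat.card_eq_fintype_card] at hforest
  simp only [Finset.sum_const, Finset.card_univ, smul_eq_mul] at hforest
  have := Fintype.card_pos (α := ι)
  nlinarith

lemma MaximalFor.reachable_of_forall_notMem [Finite V] [Fintype ι] [DecidableEq ι]
    {F : ι → SimpleGraph V} (hF : MaximalFor (IsForestPacking G) totalEdges F) {x y : V}
    (hxy : G.Adj x y) (hun : ∀ j, s(x, y) ∉ (F j).edgeSet) (i : ι) : (F i).Reachable x y := by
  by_contra hr
  have hF' : IsForestPacking G (Function.update F i (F i ⊔ edge x y)) :=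
    hF.prop.update (sup_le (hF.prop.le i) ((edge_le_iff G).2 (Or.inr hxy)))
      ((hF.prop.isAcyclic i).sup_edge_of_not_reachable hr)
      fun j hj => hF.prop.disjoint_sup_edge hj hun le_rfl
  have hsize := totalEdges_update F i (F i ⊔ edge x y)
  rw [ncard_edgeSet_sup_edge hxy.ne (hun i)] at hsize
  have := hF.2 hF' (by omega)
  omega

section Exchange

variable [DecidableEq ι]

/-- Asking `f` to separate `x` from `y` in `F i` amounts to `f` lying on the `x`–`y` path of
`F i` (`IsAcyclic.not_reachable_deleteEdges_of_mem_edges`), and keeps the new forest acyclic. -/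
def ExchangeStep (G : SimpleGraph V) (F F' : ι → SimpleGraph V) : Prop :=
  ∃ i x y f, G.Adj x y ∧ (∀ j, s(x, y) ∉ (F j).edgeSet) ∧ f ∈ (F i).edgeSet ∧
    ¬ ((F i).deleteEdges {f}).Reachable x y ∧
    F' = Function.update F i ((F i).deleteEdges {f} ⊔ edge x y)

lemma ExchangeStep.isForestPacking {F F' : ι → SimpleGraph V} (hF : IsForestPacking G F)
    (h : ExchangeStep G F F') : IsForestPacking G F' := by
  obtain ⟨i, x, y, f, hxy, hun, -, hsep, rfl⟩ := h
  exact hF.update (sup_le ((deleteEdges_le _).trans (hF.le i)) ((edge_le_iff G).2 (Or.inr hxy)))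
    (((hF.isAcyclic i).anti (deleteEdges_le _)).sup_edge_of_not_reachable hsep)
    fun j hj => hF.disjoint_sup_edge hj hun (deleteEdges_le _)

lemma ExchangeStep.totalEdges_eq [Finite V] [Fintype ι] {F F' : ι → SimpleGraph V}
    (h : ExchangeStep G F F') : totalEdges F' = totalEdges F := by
  obtain ⟨i, x, y, f, hxy, hun, hf, -, rfl⟩ := h
  have hsize := totalEdges_update F i ((F i).deleteEdges {f} ⊔ edge x y)
  rw [ncard_edgeSet_sup_edge hxy.ne fun h => hun i (edgeSet_mono (deleteEdges_le _) h),
    edgeSet_deleteEdges, Set.ncard_sdiff_singleton_add_one hf] at hsize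
  omega

lemma ExchangeStep.maximalFor [Finite V] [Fintype ι] {F F' : ι → SimpleGraph V}
    (hF : MaximalFor (IsForestPacking G) totalEdges F) (h : ExchangeStep G F F') :
    MaximalFor (IsForestPacking G) totalEdges F' := by
  refine ⟨h.isForestPacking hF.prop, fun F'' hF'' hle => ?_⟩
  rw [h.totalEdges_eq] at hle ⊢
  exact hF.2 hF'' hle

variable (G) in
def freeEdges (F₀ : ι → SimpleGraph V) : Set (Sym2 V) :=
  {e ∈ G.edgeSet | ∃ F, Relation.ReflTransGen (ExchangeStep G) F₀ F ∧ ∀ j, e ∉ (F j).edgeSet}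

section MaximalPacking

variable [Finite V] [Fintype ι] {F₀ F : ι → SimpleGraph V}
  (hF₀ : MaximalFor (IsForestPacking G) totalEdges F₀)
include hF₀

lemma MaximalFor.of_reflTransGen (hF : Relation.ReflTransGen (ExchangeStep G) F₀ F) :
    MaximalFor (IsForestPacking G) totalEdges F := by
  induction hF with
  | refl => exact hF₀
  | tail _ hstep ih => exact hstep.maximalFor ih

lemma reachable_inf_freeEdges (hF : Relation.ReflTransGen (ExchangeStep G) F₀ F) {x y : V}
    (hxy : G.Adj x y) (hun : ∀ j, s(x, y) ∉ (F j).edgeSet) (i : ι) :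
    (F i ⊓ fromEdgeSet (G.freeEdges F₀)).Reachable x y := by
  have hF' := hF₀.of_reflTransGen hF
  obtain ⟨p, hp⟩ := (hF'.reachable_of_forall_notMem hxy hun i).exists_isPath
  refine ⟨p.transfer _ fun f hf => ?_⟩
  have hfF : f ∈ (F i).edgeSet := p.edges_subset_edgeSet hf
  have hstep : ExchangeStep G F (Function.update F i ((F i).deleteEdges {f} ⊔ edge x y)) :=
    ⟨i, x, y, f, hxy, hun, hfF,
      (hF'.prop.isAcyclic i).not_reachable_deleteEdges_of_mem_edges hp hf, rfl⟩
  rw [edgeSet_inf, edgeSet_fromEdgeSet]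
  refine ⟨hfF, ⟨edgeSet_mono (hF'.prop.le i) hfF, _, hF.tail hstep, fun j hj => ?_⟩,
    (F i).not_isDiag_of_mem_edgeSet hfF⟩
  rcases eq_or_ne j i with rfl | hji
  · rw [Function.update_self] at hj
    rcases edgeSet_sup_edge_subset x y hj with rfl | hj
    · exact hun j hfF
    · rw [edgeSet_deleteEdges] at hj
      exact hj.2 rfl
  · rw [Function.update_of_ne hji] at hj
    exact (hF'.prop.pairwise_disjoint hji).ne_of_mem hj hfF rfl

lemma reachable_inf_freeEdges_of_reflTransGen
    (hF : Relation.ReflTransGen (ExchangeStep G) F₀ F) (i : ι) {u v : V}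
    (huv : (F i ⊓ fromEdgeSet (G.freeEdges F₀)).Reachable u v) :
    (F₀ i ⊓ fromEdgeSet (G.freeEdges F₀)).Reachable u v := by
  induction hF generalizing u v with
  | refl => exact huv
  | @tail F F' hF hstep ih =>
    refine ih (huv.of_forall_adj fun a b hab => ?_)
    obtain ⟨j, x, y, f, hxy, hun, -, -, rfl⟩ := hstep
    rcases eq_or_ne i j with rfl | hij
    · rw [inf_adj, Function.update_self, sup_adj, deleteEdges_adj, edge_adj] at hab
      obtain ⟨⟨hab, -⟩ | ⟨⟨rfl, rfl⟩ | ⟨rfl, rfl⟩, -⟩, hK⟩ := hab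
      · exact Adj.reachable ⟨hab, hK⟩
      · exact reachable_inf_freeEdges hF₀ hF hxy hun i
      · exact (reachable_inf_freeEdges hF₀ hF hxy hun i).symm
    · rw [Function.update_of_ne hij] at hab
      exact hab.reachable

lemma reachable_inf_freeEdges_of_reachable (i : ι) {u v : V}
    (huv : (fromEdgeSet (G.freeEdges F₀)).Reachable u v) :
    (F₀ i ⊓ fromEdgeSet (G.freeEdges F₀)).Reachable u v := by
  refine huv.of_forall_adj fun a b hab => ?_
  obtain ⟨⟨hG, F, hF, hun⟩, -⟩ := hab
  exact reachable_inf_freeEdges_of_reflTransGen hF₀ hF i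
    (reachable_inf_freeEdges hF₀ hF hG hun i)

end MaximalPacking

end Exchange

theorem IsEdgeConnected.exists_isTree_packing [Finite V] [Nonempty V] {ℓ : ℕ}
    (h : G.IsEdgeConnected (2 * ℓ)) :
    ∃ T : Fin ℓ → SimpleGraph V, (∀ i, T i ≤ G) ∧ (∀ i, (T i).IsTree) ∧
      Pairwise fun i j => Disjoint (T i).edgeSet (T j).edgeSet := by
  rcases ℓ.eq_zero_or_pos with rfl | hℓ
  · exact ⟨finZeroElim, finZeroElim, finZeroElim, fun i => i.elim0⟩
  have : Nonempty (Fin ℓ) := ⟨⟨0, hℓ⟩⟩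
  obtain ⟨F₀, hF₀⟩ := Set.Finite.exists_maximalFor totalEdges
    {F : Fin ℓ → SimpleGraph V | IsForestPacking G F}
    (Set.toFinite _) ⟨fun _ => ⊥, fun _ => bot_le, fun _ => isAcyclic_bot, fun _ _ _ => by simp⟩
  set K := fromEdgeSet (G.freeEdges F₀)
  have hK : ∀ i u v, K.Reachable u v → (F₀ i ⊓ K).Reachable u v := fun i _ _ =>
    reachable_inf_freeEdges_of_reachable hF₀ i
  have hcover : ∀ e ∈ G.edgeSet, e ∉ K.edgeSet → ∃ i, e ∈ (F₀ i).edgeSet := by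
    intro e he heK
    by_contra! hun
    rw [edgeSet_fromEdgeSet] at heK
    exact heK ⟨⟨he, F₀, .refl, hun⟩, G.not_isDiag_of_mem_edgeSet he⟩
  have hKconn :=
    (Fintype.card_fin ℓ ▸ h).preconnected_of_forall_isAcyclic hF₀.prop.isAcyclic hK hcover
  exact ⟨F₀, hF₀.prop.le, fun i => ⟨⟨fun u v => (hK i u v (hKconn u v)).mono inf_le_left⟩,
    hF₀.prop.isAcyclic i⟩, hF₀.prop.pairwise_disjoint⟩

lemma isEdgeConnected_edgeConn [Fintype V] (G : SimpleGraph V) :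
    G.IsEdgeConnected (edgeConn G) := by
  intro u v s hs
  by_contra huv
  have hle : edgeConn G ≤ (s ∩ G.edgeSet).ncard := Nat.sInf_le ⟨_, Set.inter_subset_right, rfl,
    fun hc => huv (deleteEdges_eq_inter_edgeSet s ▸ hc.preconnected u v)⟩
  have := (Set.encard_le_encard (Set.inter_subset_left (t := G.edgeSet))).trans_lt hs
  rw [← (Set.toFinite _).cast_ncard_eq] at this
  exact absurd hle (by exact_mod_cast this.not_ge)

lemma IsSteinerTree.exists_mem_edgeSet {S : Set V} {T : G.Subgraph} (hT : IsSteinerTree G S T)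
    (hS : S.Nontrivial) : ∃ e, e ∈ T.edgeSet := by
  obtain ⟨a, ha, b, hb, hab⟩ := hS
  have hreach := hT.2.connected.preconnected ⟨a, hT.1 ha⟩ ⟨b, hT.1 hb⟩
  obtain ⟨w, hw⟩ := mem_support_of_reachable (by simpa using hab) hreach
  exact ⟨s(a, w), hw⟩

lemma bddAbove_steinerTreePackings [Finite V] {S : Set V} (hS : S.Nontrivial) :
    BddAbove {n | ∃ T : Fin n → G.Subgraph, (∀ i, IsSteinerTree G S (T i)) ∧
      ∀ i j, i ≠ j → (T i).edgeSet ∩ (T j).edgeSet = ∅} := by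
  refine ⟨Nat.card G.edgeSet, ?_⟩
  rintro n ⟨T, hT, hdisj⟩
  choose e he using fun i => (hT i).exists_mem_edgeSet hS
  have hinj : Function.Injective fun i => (⟨e i, (T i).edgeSet_subset (he i)⟩ : G.edgeSet) := by
    intro i j hij
    by_contra hne
    have : e i ∈ (T i).edgeSet ∩ (T j).edgeSet := ⟨he i, (Subtype.mk.inj hij) ▸ he j⟩
    simp [hdisj i j hne] at this
  simpa using Nat.card_le_card_of_injective _ hinj

lemma IsTree.isSteinerTree_toSubgraph {T : SimpleGraph V} (hT : T.IsTree) (hle : T ≤ G)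
    (S : Set V) : IsSteinerTree G S (toSubgraph T hle) :=
  ⟨by simp,
    (Subgraph.spanningCoeEquivCoeOfSpanning _ (toSubgraph.isSpanning T hle)).isTree_iff.1 hT⟩

lemma IsEdgeConnected.le_steinerLambda [Finite V] {ℓ : ℕ} (h : G.IsEdgeConnected (2 * ℓ))
    {S : Set V} (hS : S.Nontrivial) : ℓ ≤ steinerLambda G S := by
  have : Nonempty V := ⟨hS.nonempty.some⟩
  obtain ⟨T, hle, hT, hdisj⟩ := h.exists_isTree_packing
  refine le_csSup (bddAbove_steinerTreePackings hS)
    ⟨fun i => toSubgraph (T i) (hle i), fun i => (hT i).isSteinerTree_toSubgraph (hle i) S,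
      fun i j hij => ?_⟩
  exact Set.disjoint_iff_inter_eq_empty.1 (hdisj hij)

end SimpleGraph

theorem stmt5 {V : Type*} [Fintype V] (G : SimpleGraph V) (hG : G.Connected) (k : ℕ)
    (hk : 3 ≤ k) (hkn : k ≤ Fintype.card V) :
    edgeConn G / 2 ≤ genLambda G k := by
  have hconn : G.IsEdgeConnected (2 * (edgeConn G / 2)) := fun u v =>
    (G.isEdgeConnected_edgeConn u v).anti (Nat.mul_div_le _ 2)
  obtain ⟨S₀, -, hS₀⟩ := Finset.exists_subset_card_eq (s := Finset.univ) (by simpa using hkn)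
  rw [genLambda, if_pos hG]
  refine le_csInf ⟨_, S₀, hS₀, rfl⟩ ?_
  rintro _ ⟨S, hS, rfl⟩
  exact hconn.le_steinerLambda (Finset.one_lt_card_iff_nontrivial.1 (by omega))
end

section
/- For every connected graph G of order n ≥ 6 and every k with 3 ≤ k ≤ 6, κ_k(G) ≤ κ(G). -/
/-!
Let `C` be a minimum vertex cut. If `G - C` has a side `A` with at most two vertices, choose
`S ⊇ A`: all neighbours of `A` lie in `A ∪ C`, so there are at most `#A * #C + (#A).choose 2`
edges at `A`, and each of the edge-disjoint `S`-Steiner trees uses `#A` of them, which leaves room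
for at most `#C` trees. Otherwise both sides have at least three vertices, so some `k`-set `S`
(`k ≤ 6`) avoids `C` and meets both sides; every `S`-Steiner tree then passes through a vertex of
`C`, and internally disjoint trees pass through different ones. When `C` does not disconnect `G`,
`κ(G) ≥ n - 1` and the first argument applies to a single vertex.
-/

open SimpleGraph
open scoped Classical

open Finset Function

namespace SimpleGraph

variable {V : Type*} {G : SimpleGraph V}

/-- For `W` disjoint from `C`, this says that `C` separates `W` from the rest of `G`. -/
def Encloses (G : SimpleGraph V) (C W : Set V) : Prop :=
  ∀ z ∈ W, G.neighborSet z ⊆ C ∪ W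

lemma Encloses.compl_diff {C W : Set V} (hW : G.Encloses C W) : G.Encloses C (Cᶜ \ W) := by
  rintro z ⟨hzC, hzW⟩ w hzw
  by_cases hwC : w ∈ C
  · exact Or.inl hwC
  · refine Or.inr ⟨hwC, fun hwW => ?_⟩
    rcases hW w hwW hzw.symm with h | h
    exacts [hzC h, hzW h]

lemma encloses_setOf_reachable_induce (C : Set V) (x : ↥Cᶜ) :
    G.Encloses C {z | ∃ h : z ∈ Cᶜ, (G.induce Cᶜ).Reachable x ⟨z, h⟩} := by
  rintro z ⟨hz, hxz⟩ w hzw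
  by_cases hwC : w ∈ C
  · exact Or.inl hwC
  · exact Or.inr ⟨hwC, hxz.trans (Adj.reachable (by simpa using hzw))⟩

namespace Subgraph

lemma Connected.exists_adj_mem_notMem {H : G.Subgraph} (hH : H.Connected) {A : Set V}
    {u v : V} (hu : u ∈ H.verts) (hv : v ∈ H.verts) (huA : u ∈ A) (hvA : v ∉ A) :
    ∃ x y, H.Adj x y ∧ x ∈ A ∧ y ∉ A := by
  obtain ⟨p⟩ := hH.preconnected ⟨u, hu⟩ ⟨v, hv⟩
  obtain ⟨d, -, hx, hy⟩ := p.exists_boundary_dart (Subtype.val ⁻¹' A) huA hvA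
  exact ⟨_, _, d.adj, hx, hy⟩

lemma Connected.exists_mem_of_encloses {H : G.Subgraph} (hH : H.Connected) {C W : Set V}
    (hW : G.Encloses C W) {u v : V} (hu : u ∈ H.verts) (hv : v ∈ H.verts) (huW : u ∈ W)
    (hvW : v ∉ W) : ∃ c ∈ C, c ∈ H.verts := by
  obtain ⟨x, y, hxy, hxW, hyW⟩ := hH.exists_adj_mem_notMem hu hv huW hvW
  exact ⟨y, (hW x hxW (H.adj_sub hxy)).resolve_right hyW, H.edge_vert hxy.symm⟩

lemma Connected.card_le_card_filter_mem_edgeSet {H : G.Subgraph} (hH : H.Connected)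
    {A : Finset V} (hA : A.card ≤ 2) (hAH : ↑A ⊆ H.verts) {s : V} (hs : s ∈ H.verts)
    (hsA : s ∉ A) {P : Finset (Sym2 V)} (hP : ∀ a ∈ A, ∀ w, G.Adj a w → s(a, w) ∈ P) :
    A.card ≤ #{e ∈ P | e ∈ H.edgeSet} := by
  have hedge : ∀ a ∈ A, ∀ w, H.Adj a w → s(a, w) ∈ {e ∈ P | e ∈ H.edgeSet} :=
    fun a ha w haw => mem_filter.mpr ⟨hP a ha w (H.adj_sub haw), haw⟩
  rcases A.eq_empty_or_nonempty with rfl | ⟨a, ha⟩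
  · simp
  obtain ⟨x, y, hxy, hxA, hyA⟩ := hH.exists_adj_mem_notMem (hAH ha) hs (A := ↑A) ha hsA
  rcases Nat.lt_or_ge 1 A.card with hA1 | hA1
  · obtain ⟨x', hx'A, hx'x⟩ := A.exists_mem_ne hA1 x
    have : Nontrivial H.verts :=
      Set.nontrivial_coe_sort.mpr ⟨x', hAH hx'A, s, hs, fun h => hsA (h ▸ hx'A)⟩
    obtain ⟨w, hx'w⟩ := hH.preconnected.exists_adj_of_nontrivial ⟨x', hAH hx'A⟩
    have hne : s(x, y) ≠ s(x', w) := by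
      intro h
      rcases Sym2.mem_iff.mp (h ▸ Sym2.mem_mk_left x' w) with rfl | rfl
      exacts [hx'x rfl, hyA hx'A]
    have := one_lt_card.mpr ⟨_, hedge x hxA y hxy, _, hedge x' hx'A w hx'w, hne⟩
    omega
  · exact hA1.trans (one_le_card.mpr ⟨_, hedge x hxA y hxy⟩)

end Subgraph

lemma card_mul_le_card_of_pairwise_disjoint_edgeSet {ι : Type*} [Fintype ι]
    {H : ι → G.Subgraph} (hH : Pairwise (Disjoint on fun i => (H i).edgeSet))
    (P : Finset (Sym2 V)) {c : ℕ} (hc : ∀ i, c ≤ #{e ∈ P | e ∈ (H i).edgeSet}) :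
    Fintype.card ι * c ≤ #P := by
  have hdisj : ((univ : Finset ι) : Set ι).PairwiseDisjoint
      fun i => ({e ∈ P | e ∈ (H i).edgeSet} : Finset _) :=
    fun i _ j _ hij => Finset.disjoint_left.mpr fun e hi hj =>
      Set.disjoint_left.mp (hH hij) (mem_filter.mp hi).2 (mem_filter.mp hj).2
  calc Fintype.card ι * c = ∑ _i : ι, c := by simp [mul_comm]
    _ ≤ ∑ i, #{e ∈ P | e ∈ (H i).edgeSet} := sum_le_sum fun i _ => hc i
    _ = #(univ.biUnion fun i => {e ∈ P | e ∈ (H i).edgeSet}) := (card_biUnion hdisj).symm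
    _ ≤ #P := card_le_card (biUnion_subset.mpr fun _ _ => filter_subset _ _)

end SimpleGraph

section
variable {V : Type*} {G : SimpleGraph V}

lemma IsSteinerTree.connected {S : Set V} {T : G.Subgraph} (hT : IsSteinerTree G S T) :
    T.Connected :=
  ⟨hT.2.connected⟩

lemma steinerTrees_card_le_of_encloses {S A C : Finset V} (hAC : G.Encloses ↑C ↑A)
    (hA0 : A.Nonempty) (hA : A.card ≤ 2) (hAS : A ⊆ S) {s : V} (hs : s ∈ S) (hsA : s ∉ A)
    {ι : Type*} [Fintype ι] {T : ι → G.Subgraph} (hT : ∀ i, IsSteinerTree G ↑S (T i))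
    (hdisj : Pairwise (Disjoint on fun i => (T i).edgeSet)) :
    Fintype.card ι ≤ C.card := by
  set P : Finset (Sym2 V) := ((A ×ˢ C) ∪ A.offDiag).image Sym2.mk.uncurry
  have hP : ∀ a ∈ A, ∀ w, G.Adj a w → s(a, w) ∈ P := by
    intro a ha w haw
    refine mem_image.mpr ⟨(a, w), ?_, rfl⟩
    rcases hAC a ha haw with hw | hw
    · exact mem_union_left _ (mem_product.mpr ⟨ha, hw⟩)
    · exact mem_union_right _ (mem_offDiag.mpr ⟨ha, hw, haw.ne⟩)
  have hcount : Fintype.card ι * A.card ≤ #P :=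
    card_mul_le_card_of_pairwise_disjoint_edgeSet hdisj P fun i =>
      (hT i).connected.card_le_card_filter_mem_edgeSet hA
        ((coe_subset.mpr hAS).trans (hT i).1) ((hT i).1 hs) hsA hP
  have hPcard : #P ≤ A.card * C.card + A.card.choose 2 := by
    calc #P ≤ #((A ×ˢ C).image Sym2.mk.uncurry) + #(A.offDiag.image Sym2.mk.uncurry) :=
          (card_le_card (image_union _ _).le).trans (card_union_le _ _)
      _ ≤ A.card * C.card + A.card.choose 2 := by
          rw [Sym2.card_image_offDiag, ← card_product]
          exact Nat.add_le_add_right card_image_le _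
  have hA' : A.card = 1 ∨ A.card = 2 := by have := hA0.card_pos; omega
  rcases hA' with hA' | hA' <;> rw [hA'] at hcount hPcard <;> norm_num at hPcard <;> omega

lemma steinerTrees_card_le_of_separates {S C : Finset V} {W : Set V} (hW : G.Encloses ↑C W)
    (hSC : Disjoint S C) {u v : V} (hu : u ∈ S) (hv : v ∈ S) (huW : u ∈ W) (hvW : v ∉ W)
    {ι : Type*} [Fintype ι] {T : ι → G.Subgraph} (hT : ∀ i, IsSteinerTree G ↑S (T i))
    (hdisj : Pairwise fun i j => (T i).verts ∩ (T j).verts = ↑S) :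
    Fintype.card ι ≤ C.card := by
  choose f hfC hfT using fun i =>
    (hT i).connected.exists_mem_of_encloses hW ((hT i).1 hu) ((hT i).1 hv) huW hvW
  refine card_le_card_of_injOn f (fun i _ => hfC i) fun i _ j _ hfij => ?_
  by_contra hij
  have hfS : f i ∈ (T i).verts ∩ (T j).verts := ⟨hfT i, hfij ▸ hfT j⟩
  rw [hdisj hij] at hfS
  exact disjoint_left.mp hSC hfS (hfC i)

lemma steinerKappa_le {S : Set V} {m : ℕ}
    (h : ∀ n (T : Fin n → G.Subgraph), (∀ i, IsSteinerTree G S (T i)) →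
      Pairwise (Disjoint on fun i => (T i).edgeSet) →
      Pairwise (fun i j => (T i).verts ∩ (T j).verts = S) → n ≤ m) :
    steinerKappa G S ≤ m := by
  refine csSup_le ⟨0, Fin.elim0, fun i => i.elim0, fun i => i.elim0⟩ ?_
  rintro n ⟨T, hT, hdisj⟩
  exact h n T hT (fun i j hij => Set.disjoint_iff_inter_eq_empty.mpr (hdisj i j hij).1)
    fun i j hij => (hdisj i j hij).2

variable [Fintype V]

lemma genKappa_le_steinerKappa {k : ℕ} {S : Finset V} (hS : S.card = k) :
    genKappa G k ≤ steinerKappa G ↑S := by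
  unfold genKappa
  split_ifs
  exacts [Nat.sInf_le ⟨S, hS, rfl⟩, Nat.zero_le _]

lemma exists_card_eq_vertexConn (G : SimpleGraph V) :
    ∃ C : Finset V, C.card = vertexConn G ∧
      (¬ (G.induce (↑C : Set V)ᶜ).Connected ∨ Fintype.card V ≤ vertexConn G + 1) :=
  Nat.sInf_mem (s := {m | ∃ C : Finset V, C.card = m ∧
      (¬ (G.induce (↑C : Set V)ᶜ).Connected ∨ Fintype.card V ≤ m + 1)})
    ⟨_, univ, rfl, Or.inr (by simp)⟩

lemma genKappa_le_of_encloses {A C : Finset V} (hAC : G.Encloses ↑C ↑A) (hA0 : A.Nonempty)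
    (hA : A.card ≤ 2) {k : ℕ} (hAk : A.card < k) (hkV : k ≤ Fintype.card V) :
    genKappa G k ≤ C.card := by
  obtain ⟨S, hAS, hS⟩ := exists_superset_card_eq hAk.le hkV
  obtain ⟨s, hs, hsA⟩ := exists_of_ssubset (ssubset_of_subset_of_ne hAS (by rintro rfl; omega))
  refine (genKappa_le_steinerKappa hS).trans (steinerKappa_le fun n T hT hedge _ => ?_)
  simpa using steinerTrees_card_le_of_encloses hAC hA0 hA hAS hs hsA hT hedge

lemma genKappa_le_card_sub_one {k : ℕ} (hk : 2 ≤ k) (hkV : k ≤ Fintype.card V) :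
    genKappa G k ≤ Fintype.card V - 1 := by
  obtain ⟨a⟩ : Nonempty V := Fintype.card_pos_iff.mp (by omega)
  have hA : G.Encloses ↑(univ.erase a) ↑({a} : Finset V) := by
    intro z hz w hzw
    rw [coe_singleton, Set.mem_singleton_iff] at hz
    exact Or.inl (by simpa [hz] using hzw.ne.symm)
  simpa using genKappa_le_of_encloses hA (singleton_nonempty a) (by simp) (by simpa) hkV

lemma genKappa_le_card_of_not_connected_induce {C : Finset V}
    (hC : ¬ (G.induce (↑C : Set V)ᶜ).Connected) {k : ℕ} (hk : 3 ≤ k) (hk6 : k ≤ 6)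
    (hkV : k ≤ Fintype.card V) : genKappa G k ≤ C.card := by
  rcases Set.eq_empty_or_nonempty ((↑C : Set V)ᶜ) with hCV | hCV
  · have hC : C = univ := by simpa using hCV
    exact (genKappa_le_card_sub_one (by omega) hkV).trans (by simp [hC])
  have : Nonempty ↥(↑C : Set V)ᶜ := hCV.to_subtype
  have hpre : ¬ (G.induce (↑C : Set V)ᶜ).Preconnected := fun h => hC ⟨h⟩
  obtain ⟨x, y, hxy⟩ := by simpa only [Preconnected, not_forall] using hpre
  set W : Finset V :=
    {z | ∃ h : z ∈ (↑C : Set V)ᶜ, (G.induce (↑C : Set V)ᶜ).Reachable x ⟨z, h⟩}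
  have hW : G.Encloses ↑C ↑W := by
    simpa [W] using encloses_setOf_reachable_induce (↑C : Set V) x
  have hWC : W ⊆ Cᶜ := fun z hz => by obtain ⟨h, -⟩ := (mem_filter.mp hz).2; simpa using h
  have hxW : ↑x ∈ W := mem_filter.mpr ⟨mem_univ _, x.2, .rfl⟩
  have hyW : ↑y ∉ W := fun hy => by obtain ⟨_, h⟩ := (mem_filter.mp hy).2; exact hxy h
  by_cases hWsmall : W.card ≤ 2
  · exact genKappa_le_of_encloses hW ⟨x, hxW⟩ hWsmall (by omega) hkV
  by_cases hXsmall : (Cᶜ \ W).card ≤ 2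
  · exact genKappa_le_of_encloses (A := Cᶜ \ W) (by simpa using hW.compl_diff)
      ⟨y, mem_sdiff.mpr ⟨mem_compl.mpr y.2, hyW⟩⟩ hXsmall (by omega) hkV
  have hCc : 6 ≤ Cᶜ.card := by rw [card_sdiff_of_subset hWC] at hXsmall; omega
  obtain ⟨S, hxyS, hSC, hS⟩ :=
    exists_subsuperset_card_eq (s := {↑x, ↑y}) (t := Cᶜ) (n := k)
      (by simpa [insert_subset_iff] using ⟨x.2, y.2⟩) (card_le_two.trans (by omega)) (by omega)
  refine (genKappa_le_steinerKappa hS).trans (steinerKappa_le fun n T hT _ hverts => ?_)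
  simpa using steinerTrees_card_le_of_separates hW
    (disjoint_of_subset_left hSC disjoint_compl_left) (hxyS (mem_insert_self _ _))
    (hxyS (by simp)) hxW hyW hT hverts

end

theorem stmt8_general {V : Type*} [Fintype V] (G : SimpleGraph V)
    (hn : 6 ≤ Fintype.card V) (k : ℕ) (hk : 3 ≤ k) (hk6 : k ≤ 6) :
    genKappa G k ≤ vertexConn G := by
  obtain ⟨C, hCcard, hC | hC⟩ := exists_card_eq_vertexConn G
  · exact hCcard ▸ genKappa_le_card_of_not_connected_induce hC hk hk6 (by omega)
  · exact (genKappa_le_card_sub_one (by omega) (by omega)).trans (by omega)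

theorem stmt8 {V : Type*} [Fintype V] (G : SimpleGraph V) (hG : G.Connected)
    (hn : 6 ≤ Fintype.card V) (k : ℕ) (hk : 3 ≤ k) (hk6 : k ≤ 6) :
    genKappa G k ≤ vertexConn G :=
  stmt8_general G hn k hk hk6
end

section
/- Let G be a connected graph of order n with minimum degree δ. If G has two adjacent vertices both of degree δ, then λ_k(G) ≤ δ − 1 for every k with 3 ≤ k ≤ n. -/
open SimpleGraph
open scoped Classical

/-!
Let `u, v` be adjacent vertices of minimum degree `δ` and let `S ⊇ {u, v, w}`. The edges at
`u` or `v` number `2δ - 1`, since `uv` is counted twice. Every `S`-Steiner tree uses at least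
two of them: if it avoids `uv` it needs an edge at `u` and another at `v`, and if it contains
`uv` it also needs an edge leaving `{u, v}` towards `w`. So `n` edge-disjoint Steiner trees
give `2n ≤ 2δ - 1`, i.e. `n ≤ δ - 1`.
-/

namespace SimpleGraph

variable {V : Type*} {G : SimpleGraph V}

theorem Subgraph.exists_adj_mem_notMem_of_preconnected {T : G.Subgraph}
    (hT : T.coe.Preconnected) {s : Set V} {a b : V} (ha : a ∈ T.verts) (hb : b ∈ T.verts)
    (has : a ∈ s) (hbs : b ∉ s) : ∃ x y, T.Adj x y ∧ x ∈ s ∧ y ∉ s := by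
  obtain ⟨p⟩ := hT ⟨a, ha⟩ ⟨b, hb⟩
  obtain ⟨d, -, hd₁, hd₂⟩ := p.exists_boundary_dart (Subtype.val ⁻¹' s) has hbs
  exact ⟨d.fst, d.snd, d.adj, hd₁, hd₂⟩

section Incidence

variable [Fintype V] [DecidableRel G.Adj]

theorem card_incidenceFinset_union_lt_degree_add {u v : V} (huv : G.Adj u v) :
    (G.incidenceFinset u ∪ G.incidenceFinset v).card < G.degree u + G.degree v := by
  have huv_mem : s(u, v) ∈ G.incidenceFinset u ∩ G.incidenceFinset v := by
    simp [G.mk'_mem_incidenceSet_left_iff, G.mk'_mem_incidenceSet_right_iff, huv]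
  rw [← card_incidenceFinset_eq_degree, ← card_incidenceFinset_eq_degree,
    ← Finset.card_union_add_card_inter]
  have := Finset.card_pos.2 ⟨_, huv_mem⟩
  omega

theorem mk_mem_filter_incidenceFinset_union {T : G.Subgraph} {u v a b : V} (hab : T.Adj a b)
    (ha : a = u ∨ a = v) :
    s(a, b) ∈ (G.incidenceFinset u ∪ G.incidenceFinset v).filter (· ∈ T.edgeSet) := by
  refine Finset.mem_filter.2 ⟨?_, hab⟩
  rcases ha with rfl | rfl <;> simp [G.mk'_mem_incidenceSet_left_iff, hab.adj_sub]

theorem two_le_card_filter_incidenceFinset_union {T : G.Subgraph} (hT : T.coe.Preconnected)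
    {u v w : V} (hu : u ∈ T.verts) (hv : v ∈ T.verts) (hw : w ∈ T.verts) (huv : u ≠ v)
    (hwu : w ≠ u) (hwv : w ≠ v) :
    2 ≤ ((G.incidenceFinset u ∪ G.incidenceFinset v).filter (· ∈ T.edgeSet)).card := by
  refine Finset.one_lt_card.2 ?_
  by_cases huvT : T.Adj u v
  · obtain ⟨a, b, hab, ha, hb⟩ :=
      T.exists_adj_mem_notMem_of_preconnected hT hu hw (s := {u, v}) (by simp)
        (by simp [hwu, hwv])
    simp only [Set.mem_insert_iff, Set.mem_singleton_iff, not_or] at ha hb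
    refine ⟨_, mk_mem_filter_incidenceFinset_union huvT (.inl rfl), _,
      mk_mem_filter_incidenceFinset_union hab ha, fun h => ?_⟩
    rcases Sym2.eq_iff.1 h with ⟨-, h⟩ | ⟨h, -⟩
    exacts [hb.2 h.symm, hb.1 h.symm]
  · obtain ⟨a, x, hax, ha, -⟩ :=
      T.exists_adj_mem_notMem_of_preconnected hT hu hv (s := {u}) rfl huv.symm
    obtain ⟨b, y, hby, hb, -⟩ :=
      T.exists_adj_mem_notMem_of_preconnected hT hv hu (s := {v}) rfl huv
    rw [Set.mem_singleton_iff.1 ha] at hax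
    rw [Set.mem_singleton_iff.1 hb] at hby
    refine ⟨_, mk_mem_filter_incidenceFinset_union hax (.inl rfl), _,
      mk_mem_filter_incidenceFinset_union hby (.inr rfl), fun h => ?_⟩
    rcases Sym2.eq_iff.1 h with ⟨h, -⟩ | ⟨rfl, -⟩
    exacts [huv h, huvT hby.symm]

end Incidence

theorem mul_le_card_of_pairwise_edgeSet_disjoint {ι : Type*} [Fintype ι] {T : ι → G.Subgraph}
    (hdisj : ∀ i j, i ≠ j → (T i).edgeSet ∩ (T j).edgeSet = ∅) (E : Finset (Sym2 V)) {m : ℕ}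
    (hm : ∀ i, m ≤ (E.filter (· ∈ (T i).edgeSet)).card) :
    Fintype.card ι * m ≤ E.card := by
  have hpair : (↑(Finset.univ : Finset ι) : Set ι).PairwiseDisjoint
      fun i => E.filter (· ∈ (T i).edgeSet) := by
    intro i _ j _ hij
    refine Finset.disjoint_left.2 fun e hei hej => ?_
    have : e ∈ (T i).edgeSet ∩ (T j).edgeSet :=
      ⟨(Finset.mem_filter.1 hei).2, (Finset.mem_filter.1 hej).2⟩
    rwa [hdisj i j hij] at this
  calc Fintype.card ι * m
      ≤ ∑ i, (E.filter (· ∈ (T i).edgeSet)).card :=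
        by simpa using Finset.sum_le_sum fun i (_ : i ∈ Finset.univ) => hm i
    _ = (Finset.univ.biUnion fun i => E.filter (· ∈ (T i).edgeSet)).card :=
        (Finset.card_biUnion hpair).symm
    _ ≤ E.card :=
        Finset.card_le_card (Finset.biUnion_subset.2 fun _ _ => Finset.filter_subset _ _)

theorem steinerLambda_le_of_forall {S : Set V} {b : ℕ}
    (h : ∀ n (T : Fin n → G.Subgraph), (∀ i, IsSteinerTree G S (T i)) →
      (∀ i j, i ≠ j → (T i).edgeSet ∩ (T j).edgeSet = ∅) → n ≤ b) :
    steinerLambda G S ≤ b :=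
  csSup_le ⟨0, Fin.elim0, fun i => i.elim0, fun i => i.elim0⟩
    fun _ ⟨T, hT, hdisj⟩ => h _ T hT hdisj

theorem steinerLambda_le_minDegree_sub_one [Fintype V] [DecidableRel G.Adj] {u v w : V}
    (huv : G.Adj u v) (hdu : G.degree u = G.minDegree) (hdv : G.degree v = G.minDegree)
    {S : Set V} (hu : u ∈ S) (hv : v ∈ S) (hw : w ∈ S) (hwu : w ≠ u) (hwv : w ≠ v) :
    steinerLambda G S ≤ G.minDegree - 1 := by
  refine steinerLambda_le_of_forall fun n T hT hdisj => ?_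
  have htwo : 2 * n ≤ (G.incidenceFinset u ∪ G.incidenceFinset v).card := by
    simpa [mul_comm] using mul_le_card_of_pairwise_edgeSet_disjoint hdisj _ fun i =>
      two_le_card_filter_incidenceFinset_union (hT i).2.connected.preconnected
        ((hT i).1 hu) ((hT i).1 hv) ((hT i).1 hw) huv.ne hwu hwv
  have := card_incidenceFinset_union_lt_degree_add huv
  omega

theorem genLambda_le_steinerLambda [Fintype V] (hG : G.Connected) (S : Finset V) :
    genLambda G S.card ≤ steinerLambda G S := by
  rw [genLambda, if_pos hG]
  exact Nat.sInf_le ⟨S, rfl, rfl⟩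

end SimpleGraph

theorem stmt11_general {V : Type*} [Fintype V] (G : SimpleGraph V) [DecidableRel G.Adj]
    (hG : G.Connected)
    (hadj : ∃ u v : V, G.Adj u v ∧ G.degree u = G.minDegree ∧ G.degree v = G.minDegree)
    (k : ℕ) (hk : 3 ≤ k) (hkn : k ≤ Fintype.card V) :
    genLambda G k ≤ G.minDegree - 1 := by
  obtain ⟨u, v, huv, hdu, hdv⟩ := hadj
  have hcard : ({u, v} : Finset V).card = 2 := Finset.card_pair huv.ne
  obtain ⟨S, hsub, -, rfl⟩ :=
    Finset.exists_subsuperset_card_eq (n := k) (Finset.subset_univ {u, v}) (by omega)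
      (by simpa using hkn)
  obtain ⟨w, hwS, hw⟩ := Finset.exists_mem_notMem_of_card_lt_card (s := {u, v}) (t := S)
    (by omega)
  simp only [Finset.mem_insert, Finset.mem_singleton, not_or] at hw
  exact (genLambda_le_steinerLambda hG S).trans <|
    steinerLambda_le_minDegree_sub_one huv hdu hdv (hsub (by simp)) (hsub (by simp))
      (Finset.mem_coe.2 hwS) hw.1 hw.2

theorem stmt11 {V : Type*} [Fintype V] [Nonempty V] (G : SimpleGraph V) [DecidableRel G.Adj]
    (hG : G.Connected)
    (hadj : ∃ u v : V, G.Adj u v ∧ G.degree u = G.minDegree ∧ G.degree v = G.minDegree)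
    (k : ℕ) (hk : 3 ≤ k) (hkn : k ≤ Fintype.card V) :
    genLambda G k ≤ G.minDegree - 1 :=
  stmt11_general G hG hadj k hk hkn
end

section
/- Let S be a k-subset of V(G) and T a Steiner tree connecting S. If all edges of T lie in the induced subgraph G[S], then T has exactly k − 1 edges in E(G[S]) ∪ E_G[S, S̄]; if T contains at least one edge between S and its complement S̄, then T uses at least k edges of E(G[S]) ∪ E_G[S, S̄]. -/
open SimpleGraph
open scoped Classical

/-- The edges of `G` with both endpoints in `S` (the edges of `G[S]`). -/
def insideEdges {V : Type*} (G : SimpleGraph V) (S : Set V) : Set (Sym2 V) :=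
  {e ∈ G.edgeSet | ∀ v ∈ e, v ∈ S}

/-- The edges of `G` with exactly one endpoint in `S` (i.e. `E_G[S, S̄]`). -/
def crossEdges {V : Type*} (G : SimpleGraph V) (S : Set V) : Set (Sym2 V) :=
  {e ∈ G.edgeSet | (∃ v ∈ e, v ∈ S) ∧ ¬ ∀ v ∈ e, v ∈ S}

/-! If every edge of `T` lies in `G[S]`, then `T` has no vertex outside `S`: since `T` is connected
and meets `S`, such a vertex would carry an edge of `T` leaving `S`. Hence `V(T) = S` and `T` has
`|S| - 1` edges. If instead `T` has a vertex `r ∉ S`, send each `s ∈ S` to the first edge of a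
shortest path in `T` from `s` to `r`. The distance to `r` drops by one along that edge, so the map is
injective, and its edges all meet `S`; this gives at least `|S|` such edges. -/

lemma injOn_sym2_mk_of_add_one_eq {α : Type*} {p : α → α} {d : α → ℕ} {A : Set α}
    (h : ∀ v ∈ A, d (p v) + 1 = d v) : A.InjOn fun v ↦ s(v, p v) := by
  intro u hu v hv huv
  rcases Sym2.eq_iff.mp huv with ⟨rfl, -⟩ | ⟨rfl, hpu⟩
  · rfl
  · have := h _ hu
    have := h _ hv
    rw [hpu] at *
    omega

namespace SimpleGraph

variable {V : Type*} {G : SimpleGraph V}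

lemma Reachable.exists_adj_dist_add_one_eq {u r : V} (h : G.Reachable u r) (hne : u ≠ r) :
    ∃ w, G.Adj u w ∧ G.dist w r + 1 = G.dist u r := by
  obtain ⟨p, hp⟩ := h.exists_walk_length_eq_dist
  cases p with
  | nil => exact absurd rfl hne
  | @cons _ w _ hadj q =>
    have hw : G.dist w r ≤ q.length := dist_le q
    have hu : G.dist u r ≤ G.dist u w + G.dist w r := hadj.reachable.dist_triangle_left r
    rw [dist_eq_one_iff_adj.mpr hadj] at hu
    rw [Walk.length_cons] at hp
    exact ⟨w, hadj, by omega⟩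

lemma ncard_le_ncard_incidentEdges [Finite V] {r : V} {A : Set V} (hr : r ∉ A)
    (hA : ∀ v ∈ A, G.Reachable v r) : A.ncard ≤ {e ∈ G.edgeSet | ∃ v ∈ e, v ∈ A}.ncard := by
  have hparent : ∀ v, ∃ w, v ∈ A → G.Adj v w ∧ G.dist w r + 1 = G.dist v r := by
    intro v
    by_cases hv : v ∈ A
    · obtain ⟨w, hw⟩ := (hA v hv).exists_adj_dist_add_one_eq (ne_of_mem_of_not_mem hv hr)
      exact ⟨w, fun _ ↦ hw⟩
    · exact ⟨v, fun h ↦ absurd h hv⟩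
  choose p hp using hparent
  refine Set.ncard_le_ncard_of_injOn (fun v ↦ s(v, p v)) ?_
    (injOn_sym2_mk_of_add_one_eq (d := (G.dist · r)) fun v hv ↦ (hp v hv).2) (Set.toFinite _)
  exact fun v hv ↦ ⟨(hp v hv).1, v, Sym2.mem_mk_left _ _, hv⟩

namespace Subgraph

variable {T : G.Subgraph}

lemma ncard_edgeSet_add_one_of_isTree [Finite V] (h : T.coe.IsTree) :
    T.edgeSet.ncard + 1 = T.verts.ncard := by
  obtain ⟨-, hcard⟩ := isTree_iff_connected_and_card.mp h
  rw [← T.image_coe_edgeSet_coe,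
    Set.ncard_image_of_injective _ (Sym2.map.injective Subtype.val_injective)]
  simpa only [Nat.card_coe_set_eq] using hcard

lemma Preconnected.reachable_spanningCoe (h : T.Preconnected) {u v : V} (hu : u ∈ T.verts)
    (hv : v ∈ T.verts) : T.spanningCoe.Reachable u v :=
  (h ⟨u, hu⟩ ⟨v, hv⟩).map T.coeEmbeddingSpanningCoe.toHom

lemma Preconnected.verts_subset_of_forall_mem_edgeSet (h : T.Preconnected) {S : Set V} {s : V}
    (hs : s ∈ S) (hsT : s ∈ T.verts) (hE : ∀ e ∈ T.edgeSet, ∀ v ∈ e, v ∈ S) : T.verts ⊆ S := by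
  intro v hv
  by_contra hvS
  have : Nontrivial T.verts := ⟨⟨v, hv⟩, ⟨s, hsT⟩, fun h ↦ hvS (by simp_all)⟩
  obtain ⟨u, hu⟩ := h.exists_adj_of_nontrivial ⟨v, hv⟩
  exact hvS (hE _ hu v (Sym2.mem_mk_left _ _))

end Subgraph

end SimpleGraph

lemma insideEdges_union_crossEdges {V : Type*} (G : SimpleGraph V) (S : Set V) :
    insideEdges G S ∪ crossEdges G S = {e ∈ G.edgeSet | ∃ v ∈ e, v ∈ S} := by
  ext ⟨a, b⟩
  simp only [insideEdges, crossEdges, Set.mem_union, Set.mem_ofPred_eq, Sym2.mem_iff,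
    forall_eq_or_imp, forall_eq, exists_eq_or_imp]
  tauto

theorem stmt13 {V : Type*} [Fintype V] (G : SimpleGraph V) (S : Finset V) (k : ℕ)
    (hS : S.card = k) (T : G.Subgraph) (hT : IsSteinerTree G ↑S T) :
    (T.edgeSet ⊆ insideEdges G ↑S →
      (T.edgeSet ∩ (insideEdges G ↑S ∪ crossEdges G ↑S)).ncard = k - 1) ∧
    ((∃ e ∈ T.edgeSet, e ∈ crossEdges G ↑S) →
      k ≤ (T.edgeSet ∩ (insideEdges G ↑S ∪ crossEdges G ↑S)).ncard) := by
  obtain ⟨hST, htree⟩ := hT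
  have hconn : T.Preconnected := ⟨htree.connected.preconnected⟩
  constructor
  · intro hin
    rw [Set.inter_eq_self_of_subset_left (hin.trans Set.subset_union_left), ← hS]
    rcases S.eq_empty_or_nonempty with rfl | ⟨s, hs⟩
    · have hE : T.edgeSet = ∅ := Set.eq_empty_of_forall_notMem fun e he ↦ by
        obtain ⟨a, b⟩ := e
        simpa using (hin he).2 a (Sym2.mem_mk_left _ _)
      simp [hE]
    · have hverts : T.verts = S :=
        (hconn.verts_subset_of_forall_mem_edgeSet hs (hST hs) fun e he ↦ (hin he).2).antisymm hST
      have hcount := T.ncard_edgeSet_add_one_of_isTree htree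
      rw [hverts, Set.ncard_coe_finset] at hcount
      omega
  · rintro ⟨e, heT, -, -, hnot⟩
    push Not at hnot
    obtain ⟨r, hre, hrS⟩ := hnot
    have hrT := T.mem_verts_of_mem_edge heT hre
    rw [insideEdges_union_crossEdges, ← hS, ← Set.ncard_coe_finset]
    have hcount := ncard_le_ncard_incidentEdges (A := (S : Set V)) hrS
      fun v hv ↦ hconn.reachable_spanningCoe (hST hv) hrT
    rw [Subgraph.edgeSet_spanningCoe] at hcount
    exact hcount.trans (Set.ncard_le_ncard fun e ⟨he, hv⟩ ↦ ⟨he, T.edgeSet_subset he, hv⟩)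
end

section
/- If n is odd and M is a set of at most (n−1)/2 edges of the complete graph K_n, then K_n \ M contains (n−1)/2 pairwise edge-disjoint spanning trees. -/
open SimpleGraph
open scoped Classical

/-!
Induction on `k`, where `|S| = 2k + 1` and `|M| ≤ k`. Pick a vertex `x` met by no edge of `M`
and a vertex `w` met by some edge of `M` (if there is one); let `N` be the `M`-neighbours of `w`
and `L` all of them but one. On `P = S \ {w, x}` forbid the edges of `M` avoiding `w` together
with the edges from a suitable hub `c` to `L`: at most `k` edges, so induction gives `k` trees
on `P`. Each of them is extended by the leaves `w` and `x`, hung from vertices `aᵢ` and `bᵢ`.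
The new tree hangs `x` from `w`, `L` from `c`, the `aᵢ` and the rest of `N` from `x`, and
everything else from `w`; the choice of the `aᵢ ∉ N` and of the `bᵢ` outside `{aᵢ} ∪ N \ L`
keeps all the trees edge-disjoint and off `M`.

Trees are encoded by parent pointers along which a height function decreases; on a finite
vertex type such a pointer structure is connected with one edge fewer than vertices, hence a tree.
-/

open Finset

structure PointerTree (V : Type*) where
  root : V
  parent : V → V

variable {V : Type*}

namespace PointerTree

variable {T : PointerTree V} {S P L X : Finset V} {w x a b c : V}

def edgesOn (T : PointerTree V) (S : Finset V) : Set (Sym2 V) :=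
  (fun v => s(v, T.parent v)) '' (↑S \ {T.root})

def SpansOn (T : PointerTree V) (S : Finset V) : Prop :=
  T.root ∈ S ∧ ∃ h : V → ℕ, ∀ v ∈ S, v ≠ T.root → T.parent v ∈ S ∧ h (T.parent v) < h v

lemma mk_mem_edgesOn {u v : V} :
    s(u, v) ∈ T.edgesOn S ↔
      (u ∈ S ∧ u ≠ T.root ∧ T.parent u = v) ∨ (v ∈ S ∧ v ≠ T.root ∧ T.parent v = u) := by
  simp only [edgesOn, Set.mem_image, Set.mem_sdiff, mem_coe, Set.mem_singleton_iff, Sym2.eq_iff]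
  constructor
  · rintro ⟨y, ⟨hyS, hyr⟩, ⟨rfl, rfl⟩ | ⟨rfl, rfl⟩⟩
    exacts [Or.inl ⟨hyS, hyr, rfl⟩, Or.inr ⟨hyS, hyr, rfl⟩]
  · rintro (⟨hu, hur, rfl⟩ | ⟨hv, hvr, rfl⟩)
    exacts [⟨u, ⟨hu, hur⟩, Or.inl ⟨rfl, rfl⟩⟩, ⟨v, ⟨hv, hvr⟩, Or.inr ⟨rfl, rfl⟩⟩]

lemma SpansOn.parent_ne (hT : T.SpansOn S) {v : V} (hv : v ∈ S) (hvr : v ≠ T.root) :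
    T.parent v ≠ v := fun hpv => by
  have := (hT.2.choose_spec v hv hvr).2
  rw [hpv] at this
  exact lt_irrefl _ this

lemma SpansOn.injOn (hT : T.SpansOn S) :
    Set.InjOn (fun v => s(v, T.parent v)) (↑S \ {T.root}) := by
  obtain ⟨-, h, hh⟩ := hT
  rintro u ⟨hu, hur⟩ v ⟨hv, hvr⟩ huv
  rcases Sym2.eq_iff.mp huv with ⟨huv, -⟩ | ⟨hu_eq, hv_eq⟩
  · exact huv
  · have h₁ := (hh u hu hur).2
    have h₂ := (hh v hv hvr).2
    rw [hv_eq] at h₁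
    rw [← hu_eq] at h₂
    omega

lemma SpansOn.reachable (hT : T.SpansOn S) {v : V} (hv : v ∈ S) :
    (fromEdgeSet (T.edgesOn S)).Reachable v T.root := by
  obtain ⟨-, h, hh⟩ := id hT
  induction hn : h v using Nat.strong_induction_on generalizing v with
  | _ n ih =>
    by_cases hvr : v = T.root
    · rw [hvr]
    have hadj : (fromEdgeSet (T.edgesOn S)).Adj v (T.parent v) :=
      (fromEdgeSet_adj _).mpr ⟨⟨v, ⟨hv, hvr⟩, rfl⟩, (hT.parent_ne hv hvr).symm⟩
    exact hadj.reachable.trans (ih _ (hn ▸ (hh v hv hvr).2) (hh v hv hvr).1 rfl)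

lemma SpansOn.isTree [Fintype V] (hT : T.SpansOn univ) : (fromEdgeSet (T.edgesOn univ)).IsTree := by
  have : Nonempty V := ⟨T.root⟩
  refine isTree_iff_connected_and_card.mpr ⟨Connected.mk fun u v =>
    (hT.reachable (mem_univ u)).trans (hT.reachable (mem_univ v)).symm, ?_⟩
  have hdiag : T.edgesOn univ \ Sym2.diagSet = T.edgesOn univ := by
    refine sdiff_eq_left.mpr (Set.disjoint_left.mpr ?_)
    rintro _ ⟨v, ⟨-, hvr⟩, rfl⟩ hdiag
    exact hT.parent_ne (mem_univ v) hvr (Sym2.mk_isDiag_iff.mp hdiag).symm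
  rw [edgeSet_fromEdgeSet, hdiag, Nat.card_coe_set_eq, edgesOn, hT.injOn.ncard_image, coe_univ,
    Set.ncard_sdiff_singleton_add_one (Set.mem_univ _), Set.ncard_univ]

@[simps]
noncomputable def lift (T : PointerTree V) (w x a b : V) : PointerTree V where
  root := T.root
  parent v := if v = w then a else if v = x then b else T.parent v

lemma SpansOn.lift (hT : T.SpansOn P) (hw : w ∉ P) (hx : x ∉ P) (ha : a ∈ P) (hb : b ∈ P) :
    (T.lift w x a b).SpansOn (insert w (insert x P)) := by
  obtain ⟨hr, h, hh⟩ := hT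
  have hlt : ∀ u ∈ P, h u < P.sup h + 1 := fun u hu => Nat.lt_succ_of_le (le_sup hu)
  refine ⟨mem_insert_of_mem (mem_insert_of_mem hr),
    fun v => if v ∈ P then h v else P.sup h + 1, fun v hv hvr => ?_⟩
  by_cases hvw : v = w
  · simp [hvw, ha, hw, hlt a ha]
  by_cases hvx : v = x
  · have hxw : x ≠ w := hvx ▸ hvw
    simp [hvx, hxw, hb, hx, hlt b hb]
  have hv : v ∈ P := by simpa [hvw, hvx] using hv
  simp [hvw, hvx, hv, (hh v hv hvr).1, (hh v hv hvr).2]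

lemma SpansOn.edgesOn_lift (hT : T.SpansOn P) (hw : w ∉ P) (hx : x ∉ P) (hwx : w ≠ x)
    (ha : a ∈ P) (hb : b ∈ P) {e : Sym2 V}
    (he : e ∈ (T.lift w x a b).edgesOn (insert w (insert x P))) :
    (w ∈ e → e = s(w, a)) ∧ (x ∈ e → e = s(x, b)) ∧ (w ∉ e → x ∉ e → e ∈ T.edgesOn P) := by
  obtain ⟨v, ⟨hv, hvr⟩, rfl⟩ := he
  have hwa : w ≠ a := (ne_of_mem_of_not_mem ha hw).symm
  have hxa : x ≠ a := (ne_of_mem_of_not_mem ha hx).symm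
  have hwb : w ≠ b := (ne_of_mem_of_not_mem hb hw).symm
  have hxb : x ≠ b := (ne_of_mem_of_not_mem hb hx).symm
  by_cases hvw : v = w
  · simp [hvw, hwx.symm, hxa]
  by_cases hvx : v = x
  · have hxw : x ≠ w := hvx ▸ hvw
    simp [hvx, hxw, hwb, hwx]
  have hv : v ∈ P := by simpa [hvw, hvx] using hv
  have hpT : T.parent v ∈ P := (hT.2.choose_spec v hv hvr).1
  simp only [lift_parent, hvw, hvx, if_false, Sym2.mem_iff, Ne.symm hvw, Ne.symm hvx, false_or]
  exact ⟨fun h => absurd (h ▸ hpT) hw, fun h => absurd (h ▸ hpT) hx,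
    fun _ _ => ⟨v, ⟨hv, hvr⟩, rfl⟩⟩

@[simps]
noncomputable def hubTree (w x c : V) (L X : Finset V) : PointerTree V where
  root := w
  parent v := if v = x then w else if v ∈ L then c else if v ∈ X then x else w

lemma spansOn_hubTree (hw : w ∈ S) (hx : x ∈ S) (hwx : w ≠ x)
    (hc : ∀ u ∈ L, c ∈ S ∧ c ≠ w ∧ c ≠ x ∧ c ∉ L) : (hubTree w x c L X).SpansOn S := by
  refine ⟨hw, fun v => if v = w then 0 else if v = x then 1 else if v ∈ L then 3 else 2,
    fun v hv hvw => ?_⟩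
  simp only [hubTree_root] at hvw
  by_cases hvx : v = x
  · simp [hvx, hw, hwx.symm]
  by_cases hvL : v ∈ L
  · obtain ⟨hcS, hcw, hcx, hcL⟩ := hc v hvL
    simp [hvx, hvL, hvw, hcS, hcw, hcx, hcL]
  · by_cases hvX : v ∈ X <;> simp [hvx, hvL, hvw, hvX, hw, hx, hwx.symm]

lemma mem_edgesOn_hubTree {e : Sym2 V} (he : e ∈ (hubTree w x c L X).edgesOn S) :
    w ∈ e ∨ x ∈ e ∨ ∃ u ∈ L, e = s(c, u) := by
  obtain ⟨v, -, rfl⟩ := he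
  simp only [hubTree_parent]
  split_ifs with _ hvL
  · exact Or.inl (Sym2.mem_mk_right _ _)
  · exact Or.inr (Or.inr ⟨v, hvL, Sym2.eq_swap⟩)
  · exact Or.inr (Or.inl (Sym2.mem_mk_right _ _))
  · exact Or.inl (Sym2.mem_mk_right _ _)

lemma disjoint_edgesOn_hubTree {M : Set (Sym2 V)} (hxM : ∀ e ∈ M, x ∉ e)
    (hLM : ∀ u ∈ L, s(u, c) ∉ M)
    (hwM : ∀ v ∈ S, v ≠ w → v ≠ x → v ∉ L → v ∉ X → s(v, w) ∉ M) :
    Disjoint ((hubTree w x c L X).edgesOn S) M := by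
  refine Set.disjoint_left.mpr ?_
  rintro _ ⟨v, ⟨hv, hvw⟩, rfl⟩ hvM
  simp only [hubTree_parent] at hvM
  split_ifs at hvM with hvx hvL hvX
  · exact hxM _ hvM (hvx ▸ Sym2.mem_mk_left _ _)
  · exact hLM v hvL hvM
  · exact hxM _ hvM (Sym2.mem_mk_right _ _)
  · exact hwM v hv hvw hvx hvL hvX hvM

lemma disjoint_edgesOn_hubTree_lift (hT : T.SpansOn P) (hTc : ∀ u ∈ L, s(c, u) ∉ T.edgesOn P)
    (hc : ∀ u ∈ L, c ≠ x) (hw : w ∉ P) (hx : x ∉ P) (hwx : w ≠ x) (haP : a ∈ P) (haX : a ∈ X)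
    (haL : a ∉ L) (hbP : b ∈ P) (hb : b ∈ L ∨ b ∉ X) :
    Disjoint ((hubTree w x c L X).edgesOn S)
      ((T.lift w x a b).edgesOn (insert w (insert x P))) := by
  refine Set.disjoint_left.mpr fun e he₀ he => ?_
  obtain ⟨hwe, hxe, hT'⟩ := hT.edgesOn_lift hw hx hwx haP hbP he
  have hax : a ≠ x := ne_of_mem_of_not_mem haP hx
  have hbw : b ≠ w := ne_of_mem_of_not_mem hbP hw
  have hbx : b ≠ x := ne_of_mem_of_not_mem hbP hx
  by_cases hw' : w ∈ e
  · rw [hwe hw', mk_mem_edgesOn] at he₀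
    simp [hax, haL, haX, hwx.symm] at he₀
  by_cases hx' : x ∈ e
  · rw [hxe hx', mk_mem_edgesOn] at he₀
    by_cases hbL : b ∈ L
    · simp [hbw.symm, hbx, hbL, hc b hbL] at he₀
    · simp [hbw.symm, hbx, hbL, hb.resolve_left hbL, hwx] at he₀
  obtain ⟨u, hu, rfl⟩ := (mem_edgesOn_hubTree he₀).resolve_left hw' |>.resolve_left hx'
  exact hTc u hu (hT' hw' hx')

end PointerTree

open PointerTree

structure IsTreePacking {ι : Type*} (S : Finset V) (M : Set (Sym2 V)) (T : ι → PointerTree V) :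
    Prop where
  spansOn : ∀ i, (T i).SpansOn S
  disjoint_forbidden : ∀ i, Disjoint ((T i).edgesOn S) M
  pairwise_disjoint : Pairwise fun i j => Disjoint ((T i).edgesOn S) ((T j).edgesOn S)

namespace IsTreePacking

variable {ι : Type*} {S P : Finset V} {M M' : Set (Sym2 V)} {T : ι → PointerTree V}

lemma lift (hT : IsTreePacking P M' T) {w x : V} (hw : w ∉ P) (hx : x ∉ P) (hwx : w ≠ x)
    {a b : ι → V} (ha : Function.Injective a) (hb : Function.Injective b)
    (haP : ∀ i, a i ∈ P) (hbP : ∀ i, b i ∈ P) (haM : ∀ i, s(w, a i) ∉ M)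
    (hbM : ∀ i, s(x, b i) ∉ M) (hMM' : ∀ e ∈ M, w ∉ e → x ∉ e → e ∈ M') :
    IsTreePacking (insert w (insert x P)) M fun i => (T i).lift w x (a i) (b i) := by
  have hlift := fun i e (he : e ∈ ((T i).lift w x (a i) (b i)).edgesOn (insert w (insert x P))) =>
    (hT.spansOn i).edgesOn_lift hw hx hwx (haP i) (hbP i) he
  refine ⟨fun i => (hT.spansOn i).lift hw hx (haP i) (hbP i), fun i => ?_, fun i j hij => ?_⟩
  · refine Set.disjoint_left.mpr fun e he heM => ?_
    obtain ⟨hwe, hxe, hwxe⟩ := hlift i e he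
    by_cases hw' : w ∈ e
    · exact haM i (hwe hw' ▸ heM)
    by_cases hx' : x ∈ e
    · exact hbM i (hxe hx' ▸ heM)
    exact Set.disjoint_left.mp (hT.disjoint_forbidden i) (hwxe hw' hx') (hMM' e heM hw' hx')
  · refine Set.disjoint_left.mpr fun e hei hej => ?_
    obtain ⟨hwi, hxi, hwxi⟩ := hlift i e hei
    obtain ⟨hwj, hxj, hwxj⟩ := hlift j e hej
    by_cases hw' : w ∈ e
    · exact hij (ha (Sym2.congr_right.mp ((hwi hw').symm.trans (hwj hw'))))
    by_cases hx' : x ∈ e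
    · exact hij (hb (Sym2.congr_right.mp ((hxi hx').symm.trans (hxj hx'))))
    exact Set.disjoint_left.mp (hT.pairwise_disjoint hij) (hwxi hw' hx') (hwxj hw' hx')

lemma cons {k : ℕ} {T : Fin k → PointerTree V} (hT : IsTreePacking S M T) {T₀ : PointerTree V}
    (h₀ : T₀.SpansOn S) (h₀M : Disjoint (T₀.edgesOn S) M)
    (h₀T : ∀ i, Disjoint (T₀.edgesOn S) ((T i).edgesOn S)) :
    IsTreePacking S M (Fin.cons T₀ T : Fin (k + 1) → PointerTree V) := by
  refine ⟨Fin.cases h₀ hT.spansOn, Fin.cases h₀M hT.disjoint_forbidden,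
    pairwise_fin_succ_iff.mpr ⟨fun i => ?_, fun i => ?_, fun i j hij => ?_⟩⟩
  · simpa using (h₀T i).symm
  · simpa using h₀T i
  · simpa using hT.pairwise_disjoint hij

lemma extend {k : ℕ} {L X : Finset V} {T : Fin k → PointerTree V} (hT : IsTreePacking P M' T)
    {w x c : V} (hw : w ∉ P) (hx : x ∉ P) (hwx : w ≠ x) (hxM : ∀ e ∈ M, x ∉ e)
    (hMM' : ∀ e ∈ M, w ∉ e → x ∉ e → e ∈ M')
    (hwM : ∀ v ∈ P, v ∉ L → v ∉ X → s(v, w) ∉ M)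
    (hc : ∀ u ∈ L, c ∈ P ∧ c ∉ L ∧ s(u, c) ∉ M ∧ s(c, u) ∈ M')
    {a b : Fin k → V} (ha : Function.Injective a) (hb : Function.Injective b)
    (haP : ∀ i, a i ∈ P) (haX : ∀ i, a i ∈ X \ L) (haM : ∀ i, s(w, a i) ∉ M)
    (hbP : ∀ i, b i ∈ P) (hbX : ∀ i, b i ∈ L ∨ b i ∉ X) :
    IsTreePacking (insert w (insert x P)) M
      (Fin.cons (hubTree w x c L X) fun i => (T i).lift w x (a i) (b i)) := by
  refine (hT.lift hw hx hwx ha hb haP hbP haM (fun i h => hxM _ h (Sym2.mem_mk_left _ _))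
    hMM').cons ?_ ?_ fun i => ?_
  · exact spansOn_hubTree (mem_insert_self _ _) (mem_insert_of_mem (mem_insert_self _ _)) hwx
      fun u hu => ⟨mem_insert_of_mem (mem_insert_of_mem (hc u hu).1),
        ne_of_mem_of_not_mem (hc u hu).1 hw, ne_of_mem_of_not_mem (hc u hu).1 hx, (hc u hu).2.1⟩
  · refine disjoint_edgesOn_hubTree hxM (fun u hu => (hc u hu).2.2.1) fun v hv hvw hvx => ?_
    simp only [mem_insert, hvw, hvx, false_or] at hv
    exact hwM v hv
  · obtain ⟨haX, haL⟩ := mem_sdiff.mp (haX i)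
    exact disjoint_edgesOn_hubTree_lift (hT.spansOn i)
      (fun u hu h => Set.disjoint_left.mp (hT.disjoint_forbidden i) h (hc u hu).2.2.2)
      (fun u hu => ne_of_mem_of_not_mem (hc u hu).1 hx) hw hx hwx (haP i) haX haL (hbP i) (hbX i)

lemma exists_subgraphs [Fintype V] (hT : IsTreePacking univ M T) :
    ∃ T' : ι → ((⊤ : SimpleGraph V).deleteEdges M).Subgraph,
      (∀ i, (T' i).IsSpanning ∧ (T' i).coe.IsTree) ∧
      ∀ i j, i ≠ j → (T' i).edgeSet ∩ (T' j).edgeSet = ∅ := by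
  have hle : ∀ i, fromEdgeSet ((T i).edgesOn univ) ≤ (⊤ : SimpleGraph V).deleteEdges M :=
    fun i u v huv => by
      rw [fromEdgeSet_adj] at huv
      exact deleteEdges_adj.mpr
        ⟨huv.2, fun h => Set.disjoint_left.mp (hT.disjoint_forbidden i) huv.1 h⟩
  refine ⟨fun i => toSubgraph _ (hle i), fun i => ⟨toSubgraph.isSpanning _ _,
    (Subgraph.spanningCoeEquivCoeOfSpanning (toSubgraph _ (hle i))
      (toSubgraph.isSpanning _ _)).isTree_iff.mp (hT.spansOn i).isTree⟩, fun i j hij => ?_⟩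
  ext e
  induction e using Sym2.ind with
  | _ u v =>
    simp only [Set.mem_inter_iff, Subgraph.mem_edgeSet, Set.mem_empty_iff_false, iff_false,
      not_and_or]
    by_contra! h
    exact Set.disjoint_left.mp (hT.pairwise_disjoint hij) h.1.1 h.2.1

end IsTreePacking

def EdgesWithin (S : Finset V) (M : Finset (Sym2 V)) : Prop :=
  ∀ e ∈ M, ¬e.IsDiag ∧ ∀ v ∈ e, v ∈ S

lemma exists_mem_forall_notMem_of_two_mul_card_lt {S : Finset V} {M : Finset (Sym2 V)}
    (h : 2 * #M < #S) : ∃ x ∈ S, ∀ e ∈ M, x ∉ e := by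
  have hcover : #{v ∈ S | ∃ e ∈ M, v ∈ e} ≤ 2 * #M := calc
    _ ≤ #(M.biUnion Sym2.toFinset) := card_le_card fun v hv => by
      obtain ⟨-, e, he, hve⟩ := mem_filter.mp hv
      exact mem_biUnion.mpr ⟨e, he, Sym2.mem_toFinset.mpr hve⟩
    _ ≤ #M * 2 := card_biUnion_le_card_mul _ _ _ fun e _ => by
      rw [Sym2.card_toFinset]; split_ifs <;> omega
    _ = 2 * #M := mul_comm _ _
  obtain ⟨x, hxS, hx⟩ := exists_mem_notMem_of_card_lt_card (hcover.trans_lt h)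
  exact ⟨x, hxS, fun e he hxe => hx (mem_filter.mpr ⟨hxS, e, he, hxe⟩)⟩

lemma card_filter_notMem_add_card_filter_mk_mem {S : Finset V} {M : Finset (Sym2 V)}
    (hMS : ∀ e ∈ M, ∀ v ∈ e, v ∈ S) (w : V) :
    #{e ∈ M | w ∉ e} + #{u ∈ S | s(w, u) ∈ M} = #M := by
  have himage : {e ∈ M | w ∈ e} = {u ∈ S | s(w, u) ∈ M}.image fun u => s(w, u) := by
    ext e
    simp only [mem_filter, mem_image]
    constructor
    · rintro ⟨he, hwe⟩
      obtain ⟨u, rfl⟩ := Sym2.mem_iff_exists.mp hwe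
      exact ⟨u, ⟨hMS _ he u (Sym2.mem_mk_right _ _), he⟩, rfl⟩
    · rintro ⟨u, ⟨-, hu⟩, rfl⟩
      exact ⟨hu, Sym2.mem_mk_left _ _⟩
  rw [← card_filter_add_card_filter_not (s := M) (w ∈ ·), add_comm, himage,
    card_image_of_injective _ fun u u' h => Sym2.congr_right.mp h]

lemma exists_pivot {S : Finset V} {M : Finset (Sym2 V)} {k : ℕ}
    (hMS : ∀ e ∈ M, ∀ v ∈ e, v ∈ S) (hMk : #M ≤ k + 1) {x : V} (hxM : ∀ e ∈ M, x ∉ e)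
    (hS : 1 < #S) :
    ∃ w ∈ S, w ≠ x ∧ ∃ L ⊆ {u ∈ S | s(w, u) ∈ M},
      #{e ∈ M | w ∉ e} + #L ≤ k ∧ #{u ∈ S | s(w, u) ∈ M} ≤ #L + 1 := by
  rcases M.eq_empty_or_nonempty with rfl | ⟨e, he⟩
  · obtain ⟨w, hwS, hwx⟩ := exists_mem_ne hS x
    exact ⟨w, hwS, hwx, ∅, empty_subset _, by simp⟩
  induction e using Sym2.ind with
  | _ w y =>
    have hy : y ∈ {u ∈ S | s(w, u) ∈ M} :=
      mem_filter.mpr ⟨hMS _ he y (Sym2.mem_mk_right _ _), he⟩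
    have hcard := card_filter_notMem_add_card_filter_mk_mem hMS w
    have := card_erase_add_one hy
    exact ⟨w, hMS _ he w (Sym2.mem_mk_left _ _), fun hwx => hxM _ he (hwx ▸ Sym2.mem_mk_left _ _),
      _, erase_subset y _, by omega, by omega⟩

lemma exists_hub {k : ℕ} {P N L : Finset V} {F : Finset (Sym2 V)} (hNP : N ⊆ P) (hLN : L ⊆ N)
    (hP : #P = 2 * k + 1) (hFL : #F + #L ≤ k) (hNL : #N ≤ #L + 1) :
    ∃ c, ∀ u ∈ L, c ∈ P ∧ c ∉ N ∧ ∀ e ∈ F, c ∉ e := by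
  rcases L.eq_empty_or_nonempty with rfl | hL
  · obtain ⟨c, -⟩ := card_pos.mp (by omega : 0 < #P)
    exact ⟨c, by simp⟩
  obtain ⟨c, hc, hcF⟩ := exists_mem_forall_notMem_of_two_mul_card_lt (S := P \ N) (M := F)
    (by have := hL.card_pos; rw [card_sdiff_of_subset hNP, hP]; omega)
  exact ⟨c, fun _ _ => ⟨(mem_sdiff.mp hc).1, (mem_sdiff.mp hc).2, hcF⟩⟩

lemma exists_leaf_embeddings {k : ℕ} {P N L : Finset V} (hNP : N ⊆ P) (hLN : L ⊆ N)
    (hP : #P = 2 * k + 1) (hNL : #N ≤ #L + 1) (hLk : #L ≤ k) :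
    ∃ a b : Fin k ↪ V, (∀ i, a i ∈ P ∧ a i ∉ N) ∧
      ∀ i, b i ∈ P ∧ (b i ∈ L ∨ b i ∉ univ.map a ∪ N) := by
  have hPN : #(P \ N) = 2 * k + 1 - #N := by rw [card_sdiff_of_subset hNP, hP]
  obtain ⟨a, ha⟩ := Function.Embedding.exists_of_card_le_finset (α := Fin k) (s := P \ N)
    (by rw [Fintype.card_fin]; omega)
  have hA : univ.map a ⊆ P \ N := fun v hv => by
    obtain ⟨i, -, rfl⟩ := mem_map.mp hv
    exact ha ⟨i, rfl⟩
  have hdisj : Disjoint ((P \ N) \ univ.map a) L :=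
    disjoint_left.mpr fun v hv hvL => (mem_sdiff.mp (mem_sdiff.mp hv).1).2 (hLN hvL)
  obtain ⟨b, hb⟩ := Function.Embedding.exists_of_card_le_finset (α := Fin k)
    (s := (P \ N) \ univ.map a ∪ L) (by
      rw [Fintype.card_fin, card_union_of_disjoint hdisj, card_sdiff_of_subset hA, hPN,
        card_map, card_univ, Fintype.card_fin]
      omega)
  refine ⟨a, b, fun i => mem_sdiff.mp (ha ⟨i, rfl⟩), fun i => ?_⟩
  rcases mem_union.mp (hb ⟨i, rfl⟩) with h | h
  · obtain ⟨⟨hbP, hbN⟩, hbA⟩ := mem_sdiff.mp h |>.imp_left mem_sdiff.mp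
    exact ⟨hbP, Or.inr fun hAN => (mem_union.mp hAN).elim hbA hbN⟩
  · exact ⟨hNP (hLN h), Or.inl h⟩

lemma EdgesWithin.filter_union_image {S L : Finset V} {M : Finset (Sym2 V)} {w x c : V}
    (hM : EdgesWithin S M) (hxM : ∀ e ∈ M, x ∉ e) (hLP : L ⊆ (S.erase w).erase x)
    (hc : ∀ u ∈ L, c ∈ (S.erase w).erase x ∧ c ∉ L) :
    EdgesWithin ((S.erase w).erase x) ({e ∈ M | w ∉ e} ∪ L.image fun u => s(c, u)) := by
  intro e he
  rcases mem_union.mp he with he | he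
  · obtain ⟨heM, hwe⟩ := mem_filter.mp he
    exact ⟨(hM e heM).1, fun v hv => mem_erase.mpr ⟨fun h => hxM e heM (h ▸ hv),
      mem_erase.mpr ⟨fun h => hwe (h ▸ hv), (hM e heM).2 v hv⟩⟩⟩
  · obtain ⟨u, hu, rfl⟩ := mem_image.mp he
    refine ⟨fun hd => (hc u hu).2 (Sym2.mk_isDiag_iff.mp hd ▸ hu), fun v hv => ?_⟩
    rcases Sym2.mem_iff.mp hv with rfl | rfl
    exacts [(hc u hu).1, hLP hu]

theorem exists_isTreePacking_succ {k : ℕ}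
    (ih : ∀ {P : Finset V} {M : Finset (Sym2 V)}, #P = 2 * k + 1 → EdgesWithin P M → #M ≤ k →
      ∃ T : Fin k → PointerTree V, IsTreePacking P M T)
    {S : Finset V} {M : Finset (Sym2 V)} (hS : #S = 2 * (k + 1) + 1) (hM : EdgesWithin S M)
    (hMk : #M ≤ k + 1) : ∃ T : Fin (k + 1) → PointerTree V, IsTreePacking S M T := by
  obtain ⟨x, hxS, hxM⟩ := exists_mem_forall_notMem_of_two_mul_card_lt (S := S) (M := M) (by omega)
  obtain ⟨w, hwS, hwx, L, hLN, hMwL, hNL⟩ :=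
    exists_pivot (fun e he => (hM e he).2) hMk hxM (by omega)
  set N := {u ∈ S | s(w, u) ∈ M}
  set P := (S.erase w).erase x
  have hxS' : x ∈ S.erase w := mem_erase.mpr ⟨hwx.symm, hxS⟩
  have hP : #P = 2 * k + 1 := by rw [card_erase_of_mem hxS', card_erase_of_mem hwS, hS]; rfl
  have hwP : w ∉ P := fun h => (mem_erase.mp (mem_erase.mp h).2).1 rfl
  have hxP : x ∉ P := fun h => (mem_erase.mp h).1 rfl
  have hPS : P ⊆ S := fun v hv => mem_of_mem_erase (mem_of_mem_erase hv)
  have hNP : N ⊆ P := fun u hu => by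
    obtain ⟨huS, hwu⟩ := mem_filter.mp hu
    exact mem_erase.mpr ⟨fun h => hxM _ hwu (h ▸ Sym2.mem_mk_right _ _),
      mem_erase.mpr ⟨fun h => (hM _ hwu).1 (h ▸ Sym2.mk_isDiag_iff.mpr rfl), huS⟩⟩
  obtain ⟨c, hc⟩ := exists_hub hNP hLN hP hMwL hNL
  obtain ⟨a, b, ha, hb⟩ := exists_leaf_embeddings hNP hLN hP hNL (by omega)
  have hcL : ∀ u ∈ L, c ∉ L := fun u hu hcL => (hc u hu).2.1 (hLN hcL)
  have hcM : ∀ u ∈ L, s(u, c) ∉ M := fun u hu huc => by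
    refine (hc u hu).2.2 _ (mem_filter.mpr ⟨huc, ?_⟩) (Sym2.mem_mk_right _ _)
    rw [Sym2.mem_iff, not_or]
    exact ⟨(ne_of_mem_of_not_mem (hNP (hLN hu)) hwP).symm,
      (ne_of_mem_of_not_mem (hc u hu).1 hwP).symm⟩
  -- The edges from `c` to `L` are forbidden below so that the new tree may use them.
  obtain ⟨T, hT⟩ := ih (M := {e ∈ M | w ∉ e} ∪ L.image fun u => s(c, u)) hP
    (hM.filter_union_image hxM (hLN.trans hNP) fun u hu => ⟨(hc u hu).1, hcL u hu⟩)
    ((card_union_le _ _).trans (by have := card_image_le (s := L) (f := fun u => s(c, u)); omega))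
  have hwM : ∀ v ∈ P, v ∉ L → v ∉ univ.map a ∪ N → s(v, w) ∉ M := fun v hv _ hvX hvw =>
    hvX (mem_union_right _ (mem_filter.mpr ⟨hPS hv, Sym2.eq_swap ▸ hvw⟩))
  have haX : ∀ i, a i ∈ (univ.map a ∪ N) \ L := fun i =>
    mem_sdiff.mpr ⟨mem_union_left _ (mem_map_of_mem _ (mem_univ i)), fun h => (ha i).2 (hLN h)⟩
  have haM : ∀ i, s(w, a i) ∉ M := fun i h => (ha i).2 (mem_filter.mpr ⟨hPS (ha i).1, h⟩)
  rw [← insert_erase hwS, ← insert_erase hxS']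
  exact ⟨_, hT.extend hwP hxP hwx hxM
    (fun e he hwe _ => mem_union_left _ (mem_filter.mpr ⟨he, hwe⟩)) hwM
    (fun u hu => ⟨(hc u hu).1, hcL u hu, hcM u hu, mem_union_right _ (mem_image_of_mem _ hu)⟩)
    a.injective b.injective (fun i => (ha i).1) haX haM (fun i => (hb i).1) fun i => (hb i).2⟩

theorem exists_isTreePacking {k : ℕ} {S : Finset V} {M : Finset (Sym2 V)}
    (hS : #S = 2 * k + 1) (hM : EdgesWithin S M) (hMk : #M ≤ k) :
    ∃ T : Fin k → PointerTree V, IsTreePacking S M T := by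
  induction k generalizing S M with
  | zero => exact ⟨Fin.elim0, fun i => i.elim0, fun i => i.elim0, fun i => i.elim0⟩
  | succ k ih => exact exists_isTreePacking_succ ih hS hM hMk

theorem stmt14 (n : ℕ) (hn : Odd n) (M : Set (Sym2 (Fin n)))
    (hM : M ⊆ (⊤ : SimpleGraph (Fin n)).edgeSet) (hMcard : M.ncard ≤ (n - 1) / 2) :
    ∃ T : Fin ((n - 1) / 2) → ((⊤ : SimpleGraph (Fin n)).deleteEdges M).Subgraph,
      (∀ i, (T i).IsSpanning ∧ (T i).coe.IsTree) ∧
      ∀ i j, i ≠ j → (T i).edgeSet ∩ (T j).edgeSet = ∅ := by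
  obtain ⟨k, rfl⟩ := hn
  have hk : (2 * k + 1 - 1) / 2 = k := by omega
  rw [hk] at hMcard ⊢
  have hMfin := Set.toFinite M
  obtain ⟨T, hT⟩ := exists_isTreePacking (k := k) (S := univ) (M := hMfin.toFinset) (by simp)
    (fun e he => ⟨by simpa using hM (hMfin.mem_toFinset.mp he), fun v _ => mem_univ v⟩)
    (by rwa [← Set.ncard_eq_toFinset_card M hMfin])
  exact (hMfin.coe_toFinset ▸ hT).exists_subgraphs
end

section
/- For graphs G of order n (n ≥ 2) and 2 ≤ k ≤ n, the Nordhaus–Gaddum bounds hold: 1 ≤ λ_k(G) + λ_k(Ḡ) ≤ n − ⌈k/2⌉, where Ḡ is the complement of G, with λ_k(H) = 0 whenever H is disconnected. -/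
/-
Lower bound: `G` or `Gᶜ` is connected, and a spanning tree of a connected graph is an
`S`-Steiner tree for every `S`.

Upper bound: fix `S` with `|S| = k`. The edge-disjoint `S`-Steiner trees of `G` together with
those of `Gᶜ` form one family of pairwise edge-disjoint `S`-Steiner trees of `K_n`. Each of them
has at least `k - 1` edges meeting `S`, and at least `k` unless its vertex set is exactly `S`;
in that case all its edges lie inside `S`, and as `S` spans only `C(k, 2)` pairs there are at
most `k / 2` such trees. Only `C(n, 2) - C(n - k, 2)` pairs meet `S`, so double counting bounds
the number of trees by `n - ⌈k / 2⌉`.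
-/

open SimpleGraph
open scoped Classical

open Finset

theorem Nat.add_choose_two (m k : ℕ) : (m + k).choose 2 = m.choose 2 + m * k + k.choose 2 := by
  rw [Nat.add_choose_eq, Nat.sum_antidiagonal_succ, Nat.sum_antidiagonal_succ,
    Nat.antidiagonal_zero, sum_singleton]
  simp only [zero_add, Nat.choose_zero_right, Nat.choose_one_right]
  ring

theorem le_sub_half_of_double_count {n k t a : ℕ} (hk : 2 ≤ k) (hkn : k ≤ n)
    (ha : a * (k - 1) ≤ k.choose 2) (ht : t * k ≤ n.choose 2 - (n - k).choose 2 + a) :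
    t ≤ n - (k + 1) / 2 := by
  obtain ⟨m, rfl⟩ := Nat.exists_eq_add_of_le' hkn
  obtain ⟨j, rfl⟩ := Nat.exists_eq_add_of_le' (show 1 ≤ k by omega)
  have hc : 2 * (j + 1).choose 2 = (j + 1) * j := by
    rw [Nat.choose_two_right, Nat.add_sub_cancel, mul_comm (j + 1),
      Nat.mul_div_cancel' (Nat.even_mul_succ_self j).two_dvd]
  rw [Nat.add_sub_cancel, Nat.add_choose_two, add_assoc, Nat.add_sub_cancel_left] at ht
  rw [Nat.add_sub_cancel] at ha
  have h2a : 2 * a ≤ j + 1 := Nat.le_of_mul_le_mul_right (by nlinarith) (show 0 < j by omega)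
  have ht2 : 2 * t ≤ 2 * m + j + 1 :=
    Nat.le_of_mul_le_mul_right (by nlinarith) (show 0 < j + 1 by omega)
  omega

theorem Finset.card_filter_not_isDiag_sym2 {α : Type*} [DecidableEq α] (s : Finset α) :
    #{e ∈ s.sym2 | ¬e.IsDiag} = (#s).choose 2 := by
  rw [sym2_eq_image, Sym2.filter_image_mk_not_isDiag, Sym2.card_image_offDiag]

theorem card_nonDiag_meeting {V : Type*} [Fintype V] (S : Finset V) :
    #{e : Sym2 V | ¬e.IsDiag ∧ ∃ v ∈ S, v ∈ e} =
      (Fintype.card V).choose 2 - (Fintype.card V - #S).choose 2 := by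
  have h : ({e : Sym2 V | ¬e.IsDiag ∧ ∃ v ∈ S, v ∈ e} : Finset _) =
      {e ∈ (univ : Finset V).sym2 | ¬e.IsDiag} \ {e ∈ Sᶜ.sym2 | ¬e.IsDiag} := by
    ext e
    simp only [mem_filter, mem_univ, true_and, mem_sdiff, mem_sym2_iff, mem_compl, not_and]
    grind
  rw [h, card_sdiff_of_subset (filter_subset_filter _ (sym2_mono (subset_univ _))),
    card_filter_not_isDiag_sym2, card_filter_not_isDiag_sym2, card_univ, card_compl]

namespace SimpleGraph

theorem IsTree.card_le_card_edgeFinset_meeting {W : Type*} [Fintype W]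
    {H : SimpleGraph W} [Fintype H.edgeSet] (hH : H.IsTree) {r : W} {A : Finset W}
    (hr : r ∉ A) :
    #A ≤ #{e ∈ H.edgeFinset | ∃ v ∈ A, v ∈ e} := by
  -- `a ↦` (first edge of the path from `a` to `r`) is injective on `A`: if it identifies
  -- `a ≠ b`, each of them is the next vertex on the other's path, and both paths are longer.
  choose f hf hf' using (hH.existsUnique_path · r)
  have hlen : ∀ w ≠ r, (f w).length = (f (f w).snd).length + 1 := fun w hw => by
    rw [← hf' _ (f w).tail (hf w).tail, Walk.length_tail_add_one (Walk.not_nil_of_ne hw)]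
  have hA : ∀ a ∈ A, a ≠ r := fun a ha h => hr (h ▸ ha)
  refine card_le_card_of_injOn (fun w => s(w, (f w).snd)) (fun a ha => ?_)
    (fun a ha b hb hab => ?_)
  · simp only [coe_filter, mem_edgeFinset]
    exact ⟨Walk.adj_snd (Walk.not_nil_of_ne (hA a ha)), a, ha, Sym2.mem_mk_left _ _⟩
  · rcases Sym2.eq_iff.mp hab with ⟨rfl, -⟩ | ⟨hab, hba⟩
    · rfl
    · have ha' := hlen a (hA a ha)
      have hb' := hlen b (hA b hb)
      rw [hba] at ha'
      rw [← hab] at hb'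
      omega

theorem Subgraph.card_le_card_edges_meeting {V : Type*} [Fintype V] {G : SimpleGraph V}
    {T : G.Subgraph} (hT : T.coe.IsTree) {A : Finset V} (hA : ↑A ⊆ T.verts) {r : V}
    (hr : r ∈ T.verts) (hrA : r ∉ A) :
    #A ≤ #{e : Sym2 V | e ∈ T.edgeSet ∧ ∃ v ∈ A, v ∈ e} := by
  have h := hT.card_le_card_edgeFinset_meeting (r := ⟨r, hr⟩) (A := A.subtype (· ∈ T.verts))
    (by simpa using hrA)
  rw [card_subtype, filter_true_of_mem hA] at h
  refine h.trans ?_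
  refine card_le_card_of_injOn (Sym2.map Subtype.val) (fun e he => ?_)
    (Sym2.map.injective Subtype.val_injective).injOn
  simp only [coe_filter, mem_edgeFinset, Subgraph.edgeSet_coe, Set.mem_preimage,
    mem_subtype, mem_univ, true_and] at he ⊢
  obtain ⟨he, v, hv, hve⟩ := he
  exact ⟨he, v, hv, Sym2.mem_map.mpr ⟨v, hve, rfl⟩⟩

end SimpleGraph

namespace IsSteinerTree

variable {V : Type*} [Fintype V] {G : SimpleGraph V} {S : Finset V} {T : G.Subgraph}

theorem card_le_card_edges_meeting_add_one (hT : IsSteinerTree G S T) (hS : S.Nonempty) :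
    #S ≤ #{e : Sym2 V | e ∈ T.edgeSet ∧ ∃ v ∈ S, v ∈ e} + 1 := by
  obtain ⟨s, hs⟩ := hS
  rw [← card_erase_add_one hs, Nat.add_le_add_iff_right]
  refine (Subgraph.card_le_card_edges_meeting hT.2 (fun v hv => hT.1 (mem_of_mem_erase hv))
    (hT.1 hs) (notMem_erase s S)).trans (card_le_card (monotone_filter_right _ ?_))
  rintro e - ⟨he, v, hv, hve⟩
  exact ⟨he, v, mem_of_mem_erase hv, hve⟩

theorem card_le_card_edges_meeting (hT : IsSteinerTree G S T) (hne : T.verts ≠ S) :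
    #S ≤ #{e : Sym2 V | e ∈ T.edgeSet ∧ ∃ v ∈ S, v ∈ e} := by
  obtain ⟨r, hr, hrS⟩ := Set.exists_of_ssubset (hT.1.ssubset_of_ne (Ne.symm hne))
  exact Subgraph.card_le_card_edges_meeting hT.2 hT.1 hr hrS

end IsSteinerTree

theorem card_le_of_pairwise_disjoint_steinerTrees {V ι : Type*} [Fintype V] [Fintype ι]
    {G : ι → SimpleGraph V} (T : ∀ i, (G i).Subgraph) {S : Finset V} (hS : 2 ≤ #S)
    (hT : ∀ i, IsSteinerTree (G i) S (T i))
    (hdisj : Pairwise fun i j => Disjoint (T i).edgeSet (T j).edgeSet) :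
    Fintype.card ι ≤ Fintype.card V - (#S + 1) / 2 := by
  set F : ι → Finset (Sym2 V) := fun i => {e | e ∈ (T i).edgeSet ∧ ∃ v ∈ S, v ∈ e}
  have hF : (↑(univ : Finset ι) : Set ι).PairwiseDisjoint F := fun i _ j _ hij =>
    disjoint_left.mpr fun _ hi hj =>
      Set.disjoint_left.mp (hdisj hij) (mem_filter.mp hi).2.1 (mem_filter.mp hj).2.1
  set I : Finset ι := {i | (T i).verts = S}
  have hI : #I * (#S - 1) ≤ (#S).choose 2 := calc
    #I * (#S - 1) ≤ ∑ i ∈ I, #(F i) := by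
      rw [← smul_eq_mul]
      exact card_nsmul_le_sum _ _ _ fun i hi => Nat.sub_le_of_le_add
        ((hT i).card_le_card_edges_meeting_add_one (card_pos.mp (by omega)))
    _ = #(I.biUnion F) := (card_biUnion (hF.subset (subset_univ I))).symm
    _ ≤ #{e ∈ S.sym2 | ¬e.IsDiag} := card_le_card fun e he => by
      obtain ⟨i, hi, he, -⟩ := by simpa [F] using mem_biUnion.mp he
      have hverts : (T i).verts = S := by simpa [I] using hi
      refine mem_filter.mpr ⟨mem_sym2_iff.mpr fun v hv => ?_,
        (G i).not_isDiag_of_mem_edgeSet ((T i).edgeSet_subset he)⟩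
      exact mem_coe.mp (hverts ▸ (T i).mem_verts_of_mem_edge he hv)
    _ = (#S).choose 2 := card_filter_not_isDiag_sym2 S
  have hall : Fintype.card ι * #S ≤
      (Fintype.card V).choose 2 - (Fintype.card V - #S).choose 2 + #I := calc
    Fintype.card ι * #S ≤ ∑ i, (#(F i) + if i ∈ I then 1 else 0) := by
      rw [← card_univ, ← smul_eq_mul]
      refine card_nsmul_le_sum _ _ _ fun i _ => ?_
      by_cases hi : i ∈ I
      · simpa [hi] using (hT i).card_le_card_edges_meeting_add_one (card_pos.mp (by omega))
      · simpa [hi] using (hT i).card_le_card_edges_meeting (by simpa [I] using hi)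
    _ = #(univ.biUnion F) + #I := by
      rw [sum_add_distrib, card_biUnion hF, sum_boole, filter_mem_eq_inter, univ_inter]; rfl
    _ ≤ #{e : Sym2 V | ¬e.IsDiag ∧ ∃ v ∈ S, v ∈ e} + #I := by
      gcongr
      intro e he
      obtain ⟨⟨i, he⟩, hS⟩ := by simpa [F] using mem_biUnion.mp he
      exact mem_filter.mpr
        ⟨mem_univ _, (G i).not_isDiag_of_mem_edgeSet ((T i).edgeSet_subset he), hS⟩
    _ = _ := by rw [card_nonDiag_meeting]
  exact le_sub_half_of_double_count hS (card_le_univ S) hI hall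

section steinerLambda

variable {V : Type*} (G : SimpleGraph V)

/-- `steinerLambda G S` is by definition `sSup (steinerPackingSizes G S)`, which is a junk `0`
unless the set is bounded above. -/
def steinerPackingSizes (S : Set V) : Set ℕ :=
  {n | ∃ T : Fin n → G.Subgraph, (∀ i, IsSteinerTree G S (T i)) ∧
    ∀ i j, i ≠ j → (T i).edgeSet ∩ (T j).edgeSet = ∅}

variable [Fintype V]

theorem bddAbove_steinerPackingSizes {S : Finset V} (hS : 2 ≤ #S) :
    BddAbove (steinerPackingSizes G S) := by
  refine ⟨Fintype.card V, fun m ⟨T, hT, hdisj⟩ => ?_⟩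
  have := card_le_of_pairwise_disjoint_steinerTrees (G := fun _ => G) T hS hT
    fun i j hij => Set.disjoint_iff_inter_eq_empty.mpr (hdisj i j hij)
  simpa using this.trans (Nat.sub_le _ _)

theorem steinerLambda_mem_steinerPackingSizes {S : Finset V} (hS : 2 ≤ #S) :
    steinerLambda G S ∈ steinerPackingSizes G S :=
  Nat.sSup_mem ⟨0, Fin.elim0, fun i => i.elim0, fun i => i.elim0⟩
    (bddAbove_steinerPackingSizes G hS)

variable {G}

theorem one_le_steinerLambda (hG : G.Connected) {S : Finset V} (hS : 2 ≤ #S) :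
    1 ≤ steinerLambda G S := by
  obtain ⟨T, hTG, hT⟩ := hG.exists_isTree_le
  have hsteiner : IsSteinerTree G S (toSubgraph T hTG) :=
    ⟨fun v _ => Set.mem_univ v,
      (Subgraph.spanningCoeEquivCoeOfSpanning _ (toSubgraph.isSpanning T hTG)).isTree_iff.mp hT⟩
  exact le_csSup (bddAbove_steinerPackingSizes G hS)
    ⟨fun _ => toSubgraph T hTG, fun _ => hsteiner,
      fun i j hij => absurd (Subsingleton.elim i j) hij⟩

theorem steinerLambda_add_steinerLambda_compl_le {S : Finset V} (hS : 2 ≤ #S) :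
    steinerLambda G S + steinerLambda Gᶜ S ≤ Fintype.card V - (#S + 1) / 2 := by
  obtain ⟨T, hT, hTdisj⟩ := steinerLambda_mem_steinerPackingSizes G hS
  obtain ⟨U, hU, hUdisj⟩ := steinerLambda_mem_steinerPackingSizes Gᶜ hS
  have hGU : ∀ i j, Disjoint (T i).edgeSet (U j).edgeSet := fun i j =>
    (disjoint_edgeSet.mpr disjoint_compl_right).mono (T i).edgeSet_subset (U j).edgeSet_subset
  have := card_le_of_pairwise_disjoint_steinerTrees (G := Sum.elim (fun _ => G) fun _ => Gᶜ)
    (fun | .inl i => T i | .inr j => U j) hS (by rintro (i | j); exacts [hT i, hU j]) <| by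
      rintro (i | i) (j | j) hij
      · exact Set.disjoint_iff_inter_eq_empty.mpr (hTdisj i j fun h => hij (congrArg _ h))
      · exact hGU i j
      · exact (hGU j i).symm
      · exact Set.disjoint_iff_inter_eq_empty.mpr (hUdisj i j fun h => hij (congrArg _ h))
  simpa using this

theorem genLambda_le_steinerLambda {k : ℕ} {S : Finset V} (hS : #S = k) :
    genLambda G k ≤ steinerLambda G S := by
  rw [genLambda]
  split_ifs
  · exact Nat.sInf_le ⟨S, hS, rfl⟩
  · exact Nat.zero_le _

theorem one_le_genLambda (hG : G.Connected) {k : ℕ} (hk : 2 ≤ k) (hkn : k ≤ Fintype.card V) :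
    1 ≤ genLambda G k := by
  obtain ⟨S, -, hS⟩ := exists_subset_card_eq (s := (univ : Finset V)) (by simpa using hkn)
  rw [genLambda, if_pos hG]
  exact le_csInf ⟨_, S, hS, rfl⟩ fun _ ⟨S', hS', hm⟩ =>
    hm ▸ one_le_steinerLambda hG (hS' ▸ hk)

end steinerLambda

theorem stmt17_general {V : Type*} [Fintype V] (G : SimpleGraph V) (n k : ℕ)
    (hn : Fintype.card V = n) (hk : 2 ≤ k) (hkn : k ≤ n) :
    1 ≤ genLambda G k + genLambda Gᶜ k ∧
    genLambda G k + genLambda Gᶜ k ≤ n - (k + 1) / 2 := by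
  subst hn
  have : Nonempty V := Fintype.card_pos_iff.mp (by omega)
  constructor
  · rcases G.connected_or_connected_compl with hG | hG
    · exact (one_le_genLambda hG hk hkn).trans (Nat.le_add_right _ _)
    · exact (one_le_genLambda hG hk hkn).trans (Nat.le_add_left _ _)
  · obtain ⟨S, -, hS⟩ := exists_subset_card_eq (s := (univ : Finset V)) (by simpa using hkn)
    calc genLambda G k + genLambda Gᶜ k ≤ steinerLambda G S + steinerLambda Gᶜ S :=
          add_le_add (genLambda_le_steinerLambda hS) (genLambda_le_steinerLambda hS)
      _ ≤ Fintype.card V - (k + 1) / 2 :=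
          hS ▸ steinerLambda_add_steinerLambda_compl_le (hS ▸ hk)

theorem stmt17 {V : Type*} [Fintype V] (G : SimpleGraph V) (n k : ℕ)
    (hn : Fintype.card V = n) (h2 : 2 ≤ n) (hk : 2 ≤ k) (hkn : k ≤ n) :
    1 ≤ genLambda G k + genLambda Gᶜ k ∧
    genLambda G k + genLambda Gᶜ k ≤ n - (k + 1) / 2 :=
  stmt17_general G n k hn hk hkn
end
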